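/- arXiv:1511.08737 — 6 statements merged into one kernel-verified Lean document; each statement's English description precedes it below -/
import Mathlib

section
/- Let x₁,x₂,x₃,x₄ ∈ V be pairwise η-orthogonal vectors, set φ̂ := ι(x₁)ι(x₂)ι(x₃)ι(x₄) ∈ Cl(V) and β_v := ι(v)·φ̂ − 3·φ̂·ι(v) for v ∈ V. Then for all v,w ∈ V the commutator [β_v, β_w] = β_v·β_w − β_w·β_v lies in L and commutes with φ̂ in Cl(V). -/
/-!
Write `φ` for `φ̂`. Pairwise orthogonal vectors anticommute in the Clifford algebra, so
`φ * φ` is the scalar `Q x₁ ⋯ Q x₄`. Hence for every `a`, `S a := a φ + φ a` commutes with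
`φ`, `D a := ⁅a, φ⁆` anticommutes with it, and `β_a = 2 D a - S a`. Normal-ordering words
with the Clifford relations shows `⁅S u, D t⁆ = 0` (when the `xᵢ` are not null, `S u` only
sees the component of `u` orthogonal to the `xᵢ` and `D t` the component of `t` in their
span), so `⁅β_u, β_t⁆ = 4 ⁅D u, D t⁆ + ⁅S u, S t⁆` commutes with `φ`. The same normal
ordering writes `⁅β_u, β_t⁆` as a combination of brackets `⁅ι a, ι b⁆` with `a, b` among
`u, t, xᵢ`.
-/

noncomputable section

variable (V : Type) [AddCommGroup V] [Module ℝ V]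

/-- The quadratic form `v ↦ -η(v,v)`; its Clifford algebra satisfies
`ι v * ι v = -η(v,v) • 1`. -/
def Qf (η : LinearMap.BilinForm ℝ V) : QuadraticForm ℝ V := (-η).toQuadraticMap

/-- `A` belongs to `so(V)`: it is skew-adjoint with respect to `η`. -/
def IsSkew (η : LinearMap.BilinForm ℝ V) (A : Module.End ℝ V) : Prop :=
  ∀ v w : V, η (A v) w + η v (A w) = 0

/-- `e` is an `η`-orthonormal basis exhibiting the 'mostly minus' Lorentzian
signature `(1,10)` in dimension 11. -/
def IsLorentzianBasis (η : LinearMap.BilinForm ℝ V) (e : Module.Basis (Fin 11) ℝ V) : Prop :=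
  ∀ i j, η (e i) (e j) = if i = j then (if (i : ℕ) = 0 then 1 else -1) else 0

/-- `L`: the span of the commutators `ι u * ι w - ι w * ι u`, i.e. the image of `so(V)`
inside the Clifford algebra. -/
def Lsub (η : LinearMap.BilinForm ℝ V) : Submodule ℝ (CliffordAlgebra (Qf V η)) :=
  Submodule.span ℝ {x | ∃ u w : V,
    x = CliffordAlgebra.ι (Qf V η) u * CliffordAlgebra.ι (Qf V η) w
      - CliffordAlgebra.ι (Qf V η) w * CliffordAlgebra.ι (Qf V η) u}

/-- The commutator `[x,y] = x·y − y·x` in the Clifford algebra. -/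
def brk (η : LinearMap.BilinForm ℝ V) (x y : CliffordAlgebra (Qf V η)) :
    CliffordAlgebra (Qf V η) := x * y - y * x

/-- `β_v = ι(v)·c − 3·c·ι(v)` for an element `c` of the Clifford algebra. -/
def betaC (η : LinearMap.BilinForm ℝ V) (c : CliffordAlgebra (Qf V η)) (v : V) :
    CliffordAlgebra (Qf V η) :=
  CliffordAlgebra.ι (Qf V η) v * c - (3 : ℝ) • (c * CliffordAlgebra.ι (Qf V η) v)

section Ring

variable {R A : Type*} [CommRing R] [Ring A] [Algebra R A] {φ a b : A}

theorem mul_mul_self_eq_of_commute (h : Commute (φ * φ) a) : a * φ * φ = φ * (φ * a) := by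
  rw [mul_assoc, ← h.eq, mul_assoc]

theorem commute_mul_add_mul_of_commute_mul_self (h : Commute (φ * φ) a) :
    Commute (a * φ + φ * a) φ := by
  rw [Commute, SemiconjBy, add_mul, mul_add, mul_mul_self_eq_of_commute h, mul_assoc, add_comm]

theorem lie_mul_eq_neg_mul_lie_of_commute_mul_self (h : Commute (φ * φ) a) :
    ⁅a, φ⁆ * φ = -(φ * ⁅a, φ⁆) := by
  rw [Ring.lie_def, sub_mul, mul_mul_self_eq_of_commute h, mul_sub, neg_sub, mul_assoc]

theorem commute_mul_of_mul_eq_neg_mul (ha : a * φ = -(φ * a)) (hb : b * φ = -(φ * b)) :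
    Commute (a * b) φ := by
  rw [Commute, SemiconjBy, mul_assoc, hb, mul_neg, ← mul_assoc, ha, neg_mul, neg_neg, mul_assoc]

theorem commute_lie_of_mul_eq_neg_mul (ha : a * φ = -(φ * a)) (hb : b * φ = -(φ * b)) :
    Commute ⁅a, b⁆ φ := by
  rw [Ring.lie_def]
  exact (commute_mul_of_mul_eq_neg_mul ha hb).sub_left (commute_mul_of_mul_eq_neg_mul hb ha)

theorem commute_lie_of_commute (ha : Commute a φ) (hb : Commute b φ) : Commute ⁅a, b⁆ φ := by
  rw [Ring.lie_def]
  exact (ha.mul_left hb).sub_left (hb.mul_left ha)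

theorem commute_lie_mul_sub_smul_mul (ha : Commute (φ * φ) a) (hb : Commute (φ * φ) b)
    (hab : ⁅a * φ + φ * a, ⁅b, φ⁆⁆ = 0) (hba : ⁅b * φ + φ * b, ⁅a, φ⁆⁆ = 0) :
    Commute ⁅a * φ - (3 : R) • (φ * a), b * φ - (3 : R) • (φ * b)⁆ φ := by
  have hsplit : ∀ c : A, c * φ - (3 : R) • (φ * c) = (2 : R) • ⁅c, φ⁆ - (c * φ + φ * c) := by
    intro c
    rw [Ring.lie_def]
    module
  have hlie : ⁅(2 : R) • ⁅a, φ⁆ - (a * φ + φ * a), (2 : R) • ⁅b, φ⁆ - (b * φ + φ * b)⁆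
      = (4 : R) • ⁅⁅a, φ⁆, ⁅b, φ⁆⁆ + ⁅a * φ + φ * a, b * φ + φ * b⁆
        - (2 : R) • (⁅a * φ + φ * a, ⁅b, φ⁆⁆ - ⁅b * φ + φ * b, ⁅a, φ⁆⁆) := by
    simp only [Ring.lie_def, mul_sub, sub_mul, mul_add, add_mul, smul_mul_assoc, mul_smul_comm]
    module
  rw [hsplit, hsplit, hlie, hab, hba, sub_zero, smul_zero, sub_zero]
  exact ((commute_lie_of_mul_eq_neg_mul (lie_mul_eq_neg_mul_lie_of_commute_mul_self ha)
    (lie_mul_eq_neg_mul_lie_of_commute_mul_self hb)).smul_left _).add_left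
    (commute_lie_of_commute (commute_mul_add_mul_of_commute_mul_self ha)
      (commute_mul_add_mul_of_commute_mul_self hb))

end Ring

namespace CliffordAlgebra

variable {R M : Type*} [CommRing R] [AddCommGroup M] [Module R M] {Q : QuadraticForm R M}

theorem ι_mul_ι_mul_eq_polar_smul_sub (a b : M) (x : CliffordAlgebra Q) :
    ι Q a * (ι Q b * x) = QuadraticMap.polar Q a b • x - ι Q b * (ι Q a * x) := by
  rw [← mul_assoc, ι_mul_ι_comm, sub_mul, Algebra.algebraMap_eq_smul_one, smul_one_mul,
    mul_assoc]

theorem ι_mul_ι_mul_self (a : M) (x : CliffordAlgebra Q) : ι Q a * (ι Q a * x) = Q a • x := by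
  rw [← mul_assoc, ι_sq_scalar, Algebra.algebraMap_eq_smul_one, smul_one_mul]

variable {y : Fin 4 → M} {φ : CliffordAlgebra Q}

theorem mul_self_eq_algebraMap_of_pairwise_isOrtho
    (hy : Pairwise fun i j => Q.IsOrtho (y i) (y j))
    (hφ : φ = ι Q (y 0) * ι Q (y 1) * ι Q (y 2) * ι Q (y 3)) :
    φ * φ = algebraMap R _ (Q (y 0) * Q (y 1) * Q (y 2) * Q (y 3)) := by
  subst hφ
  simp (disch := decide) only [mul_assoc, mul_smul_comm, smul_smul, mul_neg, smul_neg, neg_neg,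
    fun i j (h : j < i) x => ι_mul_ι_mul_of_isOrtho x (hy h.ne'),
    ι_sq_scalar, ι_mul_ι_mul_self, Algebra.algebraMap_eq_smul_one]
  module

theorem lie_ι_mul_add_mul_ι_lie_ι_eq_zero
    (hy : Pairwise fun i j => Q.IsOrtho (y i) (y j))
    (hφ : φ = ι Q (y 0) * ι Q (y 1) * ι Q (y 2) * ι Q (y 3)) (u t : M) :
    ⁅ι Q u * φ + φ * ι Q u, ⁅ι Q t, φ⁆⁆ = 0 := by
  subst hφ
  -- The rules sort letters into the order `ι u`, `ι t`, `ι (y 0)`, …, `ι (y 3)` (`decide`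
  -- checks the side condition `j < i`), so the rewriting normal-orders every word.
  simp (disch := decide) only [Ring.lie_def, mul_sub, sub_mul, mul_add, add_mul, mul_assoc,
    smul_mul_assoc, mul_smul_comm, smul_sub, smul_add, smul_smul, smul_neg, mul_neg,
    neg_neg, mul_one, ι_mul_ι_comm (Q := Q) t u,
    fun i => ι_mul_ι_comm (Q := Q) (y i) u,
    fun i => ι_mul_ι_mul_eq_polar_smul_sub (Q := Q) (y i) u,
    fun i => ι_mul_ι_comm (Q := Q) (y i) t,
    fun i => ι_mul_ι_mul_eq_polar_smul_sub (Q := Q) (y i) t,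
    fun i j (h : j < i) => ι_mul_ι_comm_of_isOrtho (hy h.ne'),
    fun i j (h : j < i) x => ι_mul_ι_mul_of_isOrtho x (hy h.ne'),
    ι_sq_scalar, ι_mul_ι_mul_self, Algebra.algebraMap_eq_smul_one]
  module

open QuadraticMap in
theorem lie_ι_mul_sub_smul_mul_ι_eq
    (hy : Pairwise fun i j => Q.IsOrtho (y i) (y j))
    (hφ : φ = ι Q (y 0) * ι Q (y 1) * ι Q (y 2) * ι Q (y 3)) (u t : M) :
    ⁅ι Q u * φ - (3 : R) • (φ * ι Q u), ι Q t * φ - (3 : R) • (φ * ι Q t)⁆ =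
      (4 * (Q (y 0) * Q (y 1) * Q (y 2) * Q (y 3))) • ⁅ι Q u, ι Q t⁆
      + (2 * (Q (y 1) * Q (y 2) * Q (y 3))) •
          (polar Q (y 0) u • ⁅ι Q t, ι Q (y 0)⁆ - polar Q (y 0) t • ⁅ι Q u, ι Q (y 0)⁆)
      + (2 * (Q (y 0) * Q (y 2) * Q (y 3))) •
          (polar Q (y 1) u • ⁅ι Q t, ι Q (y 1)⁆ - polar Q (y 1) t • ⁅ι Q u, ι Q (y 1)⁆)
      + (2 * (Q (y 0) * Q (y 1) * Q (y 3))) •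
          (polar Q (y 2) u • ⁅ι Q t, ι Q (y 2)⁆ - polar Q (y 2) t • ⁅ι Q u, ι Q (y 2)⁆)
      + (2 * (Q (y 0) * Q (y 1) * Q (y 2))) •
          (polar Q (y 3) u • ⁅ι Q t, ι Q (y 3)⁆ - polar Q (y 3) t • ⁅ι Q u, ι Q (y 3)⁆)
      + (3 * (Q (y 2) * Q (y 3)) * (polar Q (y 1) u * polar Q (y 0) t
          - polar Q (y 0) u * polar Q (y 1) t)) • ⁅ι Q (y 0), ι Q (y 1)⁆
      + (3 * (Q (y 1) * Q (y 3)) * (polar Q (y 2) u * polar Q (y 0) t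
          - polar Q (y 0) u * polar Q (y 2) t)) • ⁅ι Q (y 0), ι Q (y 2)⁆
      + (3 * (Q (y 1) * Q (y 2)) * (polar Q (y 3) u * polar Q (y 0) t
          - polar Q (y 0) u * polar Q (y 3) t)) • ⁅ι Q (y 0), ι Q (y 3)⁆
      + (3 * (Q (y 0) * Q (y 3)) * (polar Q (y 2) u * polar Q (y 1) t
          - polar Q (y 1) u * polar Q (y 2) t)) • ⁅ι Q (y 1), ι Q (y 2)⁆
      + (3 * (Q (y 0) * Q (y 2)) * (polar Q (y 3) u * polar Q (y 1) t
          - polar Q (y 1) u * polar Q (y 3) t)) • ⁅ι Q (y 1), ι Q (y 3)⁆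
      + (3 * (Q (y 0) * Q (y 1)) * (polar Q (y 3) u * polar Q (y 2) t
          - polar Q (y 2) u * polar Q (y 3) t)) • ⁅ι Q (y 2), ι Q (y 3)⁆ := by
  subst hφ
  simp (disch := decide) only [Ring.lie_def, mul_sub, sub_mul, mul_assoc,
    smul_mul_assoc, mul_smul_comm, smul_sub, smul_smul, smul_neg, mul_neg,
    neg_neg, mul_one, ι_mul_ι_comm (Q := Q) t u,
    fun i => ι_mul_ι_comm (Q := Q) (y i) u,
    fun i => ι_mul_ι_mul_eq_polar_smul_sub (Q := Q) (y i) u,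
    fun i => ι_mul_ι_comm (Q := Q) (y i) t,
    fun i => ι_mul_ι_mul_eq_polar_smul_sub (Q := Q) (y i) t,
    fun i j (h : j < i) => ι_mul_ι_comm_of_isOrtho (hy h.ne'),
    fun i j (h : j < i) x => ι_mul_ι_mul_of_isOrtho x (hy h.ne'),
    ι_sq_scalar, ι_mul_ι_mul_self, Algebra.algebraMap_eq_smul_one]
  module

end CliffordAlgebra

theorem isOrtho_Qf (η : LinearMap.BilinForm ℝ V) {a b : V} (hab : η a b = 0) (hba : η b a = 0) :
    (Qf V η).IsOrtho a b :=
  QuadraticMap.isOrtho_polarBilin.mp <| by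
    rw [QuadraticMap.polarBilin_apply_apply, Qf, LinearMap.BilinMap.polar_toQuadraticMap]
    simp [hab, hba]

theorem lie_ι_mem_Lsub (η : LinearMap.BilinForm ℝ V) (a b : V) :
    ⁅CliffordAlgebra.ι (Qf V η) a, CliffordAlgebra.ι (Qf V η) b⁆ ∈ Lsub V η :=
  Submodule.subset_span ⟨a, b, Ring.lie_def _ _⟩

theorem stmt_4
    (η : LinearMap.BilinForm ℝ V)
    (x₁ x₂ x₃ x₄ : V)
    (horth : ∀ i j : Fin 4, i ≠ j → η (![x₁, x₂, x₃, x₄] i) (![x₁, x₂, x₃, x₄] j) = 0)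
    (φc : CliffordAlgebra (Qf V η))
    (hφc : φc = CliffordAlgebra.ι (Qf V η) x₁ * CliffordAlgebra.ι (Qf V η) x₂ *
      CliffordAlgebra.ι (Qf V η) x₃ * CliffordAlgebra.ι (Qf V η) x₄) :
    ∀ v w : V,
      brk V η (betaC V η φc v) (betaC V η φc w) ∈ Lsub V η ∧
      brk V η (betaC V η φc v) (betaC V η φc w) * φc
        = φc * brk V η (betaC V η φc v) (betaC V η φc w) := by
  intro v w
  have hy : Pairwise fun i j => (Qf V η).IsOrtho (![x₁, x₂, x₃, x₄] i) (![x₁, x₂, x₃, x₄] j) :=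
    fun i j hij => isOrtho_Qf V η (horth i j hij) (horth j i hij.symm)
  have hsq : ∀ c, Commute (φc * φc) c := fun c => by
    rw [CliffordAlgebra.mul_self_eq_algebraMap_of_pairwise_isOrtho hy hφc]
    exact Algebra.commutes _ c
  have hbrk : brk V η (betaC V η φc v) (betaC V η φc w) =
      ⁅CliffordAlgebra.ι _ v * φc - (3 : ℝ) • (φc * CliffordAlgebra.ι _ v),
        CliffordAlgebra.ι _ w * φc - (3 : ℝ) • (φc * CliffordAlgebra.ι _ w)⁆ :=
    (Ring.lie_def _ _).symm
  rw [hbrk]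
  refine ⟨?_, (commute_lie_mul_sub_smul_mul (hsq _) (hsq _)
    (CliffordAlgebra.lie_ι_mul_add_mul_ι_lie_ι_eq_zero hy hφc v w)
    (CliffordAlgebra.lie_ι_mul_add_mul_ι_lie_ι_eq_zero hy hφc w v)).eq⟩
  rw [CliffordAlgebra.lie_ι_mul_sub_smul_mul_ι_eq hy hφc]
  repeat' with_reducible first
    | exact lie_ι_mem_Lsub V η _ _
    | refine Submodule.add_mem _ ?_ ?_
    | refine Submodule.sub_mem _ ?_ ?_
    | refine Submodule.smul_mem _ _ ?_
end
end

section
/- Let x₁,x₂,x₃,x₄ ∈ V be pairwise η-orthogonal with η(xᵢ,xᵢ) ≠ 0 for each i, let Π := span{x₁,x₂,x₃,x₄} (so η restricted to Π is nondegenerate and V = Π ⊕ Π^⊥, where Π^⊥ is the η-orthogonal complement), and set φ̂ := ι(x₁)ι(x₂)ι(x₃)ι(x₄) ∈ Cl(V) and β_v := ι(v)·φ̂ − 3·φ̂·ι(v). For v,w ∈ V write v = v⊤ + v⊥ and w = w⊤ + w⊥ with v⊤,w⊤ ∈ Π and v⊥,w⊥ ∈ Π^⊥. Then in Cl(V): [β_v,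 β_w] = −16·(ι(v⊤)ι(w⊤) − ι(w⊤)ι(v⊤))·φ̂² + 4·(ι(v⊥)ι(w⊥) − ι(w⊥)ι(v⊥))·φ̂². -/
/-! For `u ∈ Π` the generator `ι u` anticommutes with three of the four factors of `φ̂` and
commutes with the remaining one, hence anticommutes with `φ̂`; for `u ∈ Π^⊥` it anticommutes
with all four and so commutes with `φ̂`. Consequently `β_v = 4·ι(v⊤)·φ̂ − 2·ι(v⊥)·φ̂`.
Expanding `[β_v, β_w]` and moving every `φ̂` to the right produces the two stated terms plus
mixed terms, which cancel because `ι(v⊤)` anticommutes with `ι(w⊥)` and `ι(v⊥)` with `ι(w⊤)`. -/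

noncomputable section

variable (V : Type) [AddCommGroup V] [Module ℝ V]

theorem prod_ite_eq_neg_one_pow {n : ℕ} (i : Fin n) :
    (∏ j, if j = i then 1 else -1 : ℤ) = (-1) ^ (n + 1) := by
  rw [Finset.prod_ite, Finset.prod_const_one, one_mul, Finset.prod_const, Finset.filter_ne',
    Finset.card_erase_of_mem (Finset.mem_univ i), Finset.card_univ, Fintype.card_fin]
  cases n with
  | zero => exact i.elim0
  | succ m => simp [pow_succ]

section Ring

variable {R : Type*} [Ring R]

theorem mul_list_ofFn_prod_eq_smul {n : ℕ} {u : R} {f : Fin n → R} {ε : Fin n → ℤ}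
    (h : ∀ i, u * f i = ε i • (f i * u)) :
    u * (List.ofFn f).prod = (∏ i, ε i) • ((List.ofFn f).prod * u) := by
  induction n with
  | zero => simp
  | succ n ih =>
    rw [List.ofFn_succ, List.prod_cons, Fin.prod_univ_succ, ← mul_assoc, h 0, smul_mul_assoc,
      mul_assoc, ih fun i => h i.succ, mul_smul_comm, smul_smul, mul_assoc]

theorem mul_mul_mul_of_mul_eq_neg {a b φ : R} (hb : b * φ = -(φ * b)) :
    a * φ * (b * φ) = -(a * b * (φ * φ)) := by
  rw [mul_assoc, ← mul_assoc φ, neg_eq_iff_eq_neg.mp hb.symm]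
  noncomm_ring

theorem mul_mul_mul_of_commute {a b φ : R} (hb : Commute b φ) :
    a * φ * (b * φ) = a * b * (φ * φ) := by
  rw [mul_assoc, ← mul_assoc φ, hb.symm.eq]
  noncomm_ring

theorem lie_smul_mul_add_smul_mul [Algebra ℝ R] {a b c d φ : R}
    (ha : a * φ = -(φ * a)) (hb : b * φ = -(φ * b)) (hc : Commute c φ) (hd : Commute d φ)
    (had : a * d = -(d * a)) (hcb : c * b = -(b * c)) :
    ⁅(4 : ℝ) • (a * φ) + (-2 : ℝ) • (c * φ), (4 : ℝ) • (b * φ) + (-2 : ℝ) • (d * φ)⁆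
      = (-16 : ℝ) • (⁅a, b⁆ * (φ * φ)) + (4 : ℝ) • (⁅c, d⁆ * (φ * φ)) := by
  simp only [Ring.lie_def, add_mul, mul_add, smul_mul_smul_comm, sub_mul,
    mul_mul_mul_of_mul_eq_neg ha, mul_mul_mul_of_mul_eq_neg hb,
    mul_mul_mul_of_commute hc, mul_mul_mul_of_commute hd, had, hcb, neg_mul]
  module

end Ring

section Clifford

variable {V} {η : LinearMap.BilinForm ℝ V}

local notation "ι" => CliffordAlgebra.ι (Qf V η)

theorem IsLorentzianBasis.isSymm {e : Module.Basis (Fin 11) ℝ V}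
    (he : IsLorentzianBasis V η e) : η.IsSymm := by
  refine (LinearMap.BilinForm.isSymm_iff_basis e).mpr fun i j => ?_
  rw [he, he]
  by_cases hij : i = j
  · subst hij; rfl
  · simp [hij, Ne.symm hij]

theorem ι_mul_ι_eq_neg_of_eq_zero (hη : η.IsSymm) {a b : V} (h : η a b = 0) :
    ι a * ι b = -(ι b * ι a) :=
  CliffordAlgebra.ι_mul_ι_comm_of_isOrtho <|
    (LinearMap.BilinForm.toQuadraticMap_isOrtho
      (LinearMap.BilinForm.isSymm_iff.mp hη.neg)).mpr (by simp [h])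

theorem betaC_add (c : CliffordAlgebra (Qf V η)) (u w : V) :
    betaC V η c (u + w) = betaC V η c u + betaC V η c w := by
  simp only [betaC, map_add, add_mul, mul_add, smul_add]
  abel

theorem betaC_of_mul_eq_neg {c : CliffordAlgebra (Qf V η)} {u : V}
    (h : ι u * c = -(c * ι u)) : betaC V η c u = (4 : ℝ) • (ι u * c) := by
  rw [betaC, neg_eq_iff_eq_neg.mp h.symm]
  module

theorem betaC_of_commute {c : CliffordAlgebra (Qf V η)} {u : V}
    (h : Commute (ι u) c) : betaC V η c u = (-2 : ℝ) • (ι u * c) := by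
  rw [betaC, h.symm.eq]
  module

section OrthogonalFamily

variable {n : ℕ} {x : Fin n → V}

theorem ι_mul_ι_eq_ite_smul (hη : η.IsSymm) (hx : η.iIsOrtho x) (i j : Fin n) :
    ι (x i) * ι (x j) = (if j = i then 1 else -1 : ℤ) • (ι (x j) * ι (x i)) := by
  split_ifs with hji
  · rw [hji, one_smul]
  · rw [ι_mul_ι_eq_neg_of_eq_zero hη (hx (Ne.symm hji)), neg_one_smul]

theorem ι_mul_prod_eq_smul_of_mem_span (hη : η.IsSymm) (hx : η.iIsOrtho x) {u : V}
    (hu : u ∈ Submodule.span ℝ (Set.range x)) :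
    ι u * (List.ofFn fun i => ι (x i)).prod
      = ((-1) ^ (n + 1) : ℤ) • ((List.ofFn fun i => ι (x i)).prod * ι u) := by
  induction hu using Submodule.span_induction with
  | mem y hy =>
    obtain ⟨i, rfl⟩ := hy
    rw [mul_list_ofFn_prod_eq_smul (ι_mul_ι_eq_ite_smul hη hx i), prod_ite_eq_neg_one_pow]
  | zero => simp
  | add y z _ _ hy hz => rw [map_add, add_mul, hy, hz, mul_add, smul_add]
  | smul r y _ hy => rw [map_smul, smul_mul_assoc, hy, mul_smul_comm, smul_comm]

theorem ι_mul_prod_eq_smul_of_mem_orthogonal (hη : η.IsSymm) {u : V}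
    (hu : u ∈ η.orthogonal (Submodule.span ℝ (Set.range x))) :
    ι u * (List.ofFn fun i => ι (x i)).prod
      = ((-1) ^ n : ℤ) • ((List.ofFn fun i => ι (x i)).prod * ι u) := by
  have h i : ι u * ι (x i) = (-1 : ℤ) • (ι (x i) * ι u) := by
    rw [neg_one_smul, ι_mul_ι_eq_neg_of_eq_zero hη
      ((hη.eq _ _).trans (hu _ (Submodule.subset_span ⟨i, rfl⟩)))]
  rw [mul_list_ofFn_prod_eq_smul h, Finset.prod_const, Finset.card_univ, Fintype.card_fin]

end OrthogonalFamily

end Clifford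

theorem stmt_5
    (η : LinearMap.BilinForm ℝ V) (e : Module.Basis (Fin 11) ℝ V) (he : IsLorentzianBasis V η e)
    (x₁ x₂ x₃ x₄ : V)
    (horth : ∀ i j : Fin 4, i ≠ j → η (![x₁, x₂, x₃, x₄] i) (![x₁, x₂, x₃, x₄] j) = 0)
    (φc : CliffordAlgebra (Qf V η))
    (hφc : φc = CliffordAlgebra.ι (Qf V η) x₁ * CliffordAlgebra.ι (Qf V η) x₂ *
      CliffordAlgebra.ι (Qf V η) x₃ * CliffordAlgebra.ι (Qf V η) x₄)
    (v w vT wT vP wP : V)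
    (hvT : vT ∈ Submodule.span ℝ {x₁, x₂, x₃, x₄})
    (hwT : wT ∈ Submodule.span ℝ {x₁, x₂, x₃, x₄})
    (hvP : vP ∈ η.orthogonal (Submodule.span ℝ {x₁, x₂, x₃, x₄}))
    (hwP : wP ∈ η.orthogonal (Submodule.span ℝ {x₁, x₂, x₃, x₄}))
    (hv : v = vT + vP) (hw : w = wT + wP) :
    brk V η (betaC V η φc v) (betaC V η φc w)
      = (-16 : ℝ) • (brk V η (CliffordAlgebra.ι (Qf V η) vT) (CliffordAlgebra.ι (Qf V η) wT)
          * (φc * φc))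
        + (4 : ℝ) • (brk V η (CliffordAlgebra.ι (Qf V η) vP) (CliffordAlgebra.ι (Qf V η) wP)
          * (φc * φc)) := by
  have hη := he.isSymm
  have hx : η.iIsOrtho ![x₁, x₂, x₃, x₄] := LinearMap.BilinForm.iIsOrtho_def.mpr horth
  have hspan : Submodule.span ℝ {x₁, x₂, x₃, x₄}
      = Submodule.span ℝ (Set.range ![x₁, x₂, x₃, x₄]) := by
    simp only [Matrix.range_cons, Matrix.range_empty, Set.union_empty, Set.singleton_union]
  have hφ : φc = (List.ofFn fun i => CliffordAlgebra.ι (Qf V η) (![x₁, x₂, x₃, x₄] i)).prod := by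
    simp [hφc, List.ofFn_succ, mul_assoc]
  have hT {u : V} (hu : u ∈ Submodule.span ℝ {x₁, x₂, x₃, x₄}) :
      CliffordAlgebra.ι (Qf V η) u * φc = -(φc * CliffordAlgebra.ι (Qf V η) u) := by
    have := ι_mul_prod_eq_smul_of_mem_span hη hx (hspan ▸ hu)
    rwa [← hφ, show ((-1) ^ (4 + 1) : ℤ) = -1 by norm_num, neg_one_smul] at this
  have hP {u : V} (hu : u ∈ η.orthogonal (Submodule.span ℝ {x₁, x₂, x₃, x₄})) :
      Commute (CliffordAlgebra.ι (Qf V η) u) φc := by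
    have := ι_mul_prod_eq_smul_of_mem_orthogonal hη (hspan ▸ hu)
    rwa [← hφ, show ((-1) ^ 4 : ℤ) = 1 by norm_num, one_smul] at this
  rw [hv, hw, betaC_add, betaC_add, betaC_of_mul_eq_neg (hT hvT), betaC_of_commute (hP hvP),
    betaC_of_mul_eq_neg (hT hwT), betaC_of_commute (hP hwP)]
  exact lie_smul_mul_add_smul_mul (hT hvT) (hT hwT) (hP hvP) (hP hwP)
    (ι_mul_ι_eq_neg_of_eq_zero hη (hwP vT hvT))
    (ι_mul_ι_eq_neg_of_eq_zero hη ((hη.eq _ _).trans (hvP wT hwT)))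
end
end

section
/- Let φ = x₁∧x₂∧x₃∧x₄ ∈ Λ⁴V be a nonzero decomposable 4-form with 4-plane Π := span{x₁,x₂,x₃,x₄}, and suppose the restriction of η to Π is nondegenerate (so V = Π ⊕ Π^⊥). Then for every A ∈ so(V): A·φ = 0 if and only if A(Π) ⊆ Π and A(Π^⊥) ⊆ Π^⊥. (Hence h_φ = so(Π) ⊕ so(Π^⊥).) -/
/-! By the Leibniz rule, `A·(x₁∧x₂∧x₃∧x₄) = ∑ᵢ x₁∧⋯∧Axᵢ∧⋯∧x₄`. If `A` preserves `Π`, the `i`-th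
summand is `aᵢᵢ φ` for the matrix `(aᵢⱼ)` of `A|Π`, so `A·φ = tr(A|Π) φ`, and this trace vanishes
because `A|Π` is skew for the nondegenerate form `η|Π`. If instead some `Axᵢ ∉ Π`, a suitable
determinant 4-form sees only the `i`-th summand, so `A·φ ≠ 0`. Finally, skewness turns
`A(Π) ⊆ Π` into `A(Π^⊥) ⊆ Π^⊥`. -/

noncomputable section

variable (V : Type) [AddCommGroup V] [Module ℝ V]

/-- `D` is the derivation action of `gl(V)` on the exterior algebra: for each
`A : End(V)`, `D A` is the unique derivation extending `A`. -/
def IsDerAction (D : Module.End ℝ V → Module.End ℝ (ExteriorAlgebra ℝ V)) : Prop :=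
  ∀ A : Module.End ℝ V,
    (∀ v : V, D A (ExteriorAlgebra.ι ℝ v) = ExteriorAlgebra.ι ℝ (A v)) ∧
    (∀ r : ℝ, D A (algebraMap ℝ (ExteriorAlgebra ℝ V) r) = 0) ∧
    (∀ x y : ExteriorAlgebra ℝ V, D A (x * y) = D A x * y + x * D A y)

open ExteriorAlgebra Function Submodule

namespace AlternatingMap

variable {R M N ι : Type*} [CommRing R] [AddCommGroup M] [Module R M] [AddCommGroup N]
  [Module R N] [Fintype ι] [DecidableEq ι]

theorem map_update_sum_smul (f : M [⋀^ι]→ₗ[R] N) (X : ι → M) (c : ι → R) (i : ι) :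
    f (update X i (∑ j, c j • X j)) = c i • f X := by
  rw [f.map_update_sum, Finset.sum_eq_single i, f.map_update_smul, update_eq_self]
  · intro j _ hji
    rw [f.map_update_smul, f.map_update_self _ hji.symm, smul_zero]
  · simp

theorem sum_map_update_basis (f : M [⋀^ι]→ₗ[R] N) (b : Module.Basis ι R M)
    (T : Module.End R M) : ∑ i, f (update b i (T (b i))) = LinearMap.trace R M T • f b := by
  have := Module.Free.of_basis b
  have := Module.Finite.of_basis b
  rw [LinearMap.trace_eq_matrix_trace R b T, Matrix.trace, Finset.sum_smul]
  refine Finset.sum_congr rfl fun i _ => ?_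
  conv_lhs => rw [← b.sum_repr (T (b i)), f.map_update_sum_smul]
  rw [Matrix.diag_apply, LinearMap.toMatrix_apply]

theorem sum_map_update_of_mapsTo_span (f : M [⋀^ι]→ₗ[R] N) {X : ι → M}
    (hX : LinearIndependent R X) {A : Module.End R M}
    (hA : ∀ x ∈ span R (Set.range X), A x ∈ span R (Set.range X)) :
    ∑ i, f (update X i (A (X i))) = LinearMap.trace R _ (A.restrict hA) • f X := by
  have hb : (span R (Set.range X)).subtype ∘ Module.Basis.span hX = X := by
    funext i
    simp [Module.Basis.span_apply]
  have := (f.compLinearMap (span R (Set.range X)).subtype).sum_map_update_basis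
    (Module.Basis.span hX) (A.restrict hA)
  simp only [AlternatingMap.compLinearMap_apply] at this
  convert this using 3 with i
  · rw [← comp_def, comp_update, hb]
    simp [Module.Basis.span_apply]
  · exact hb.symm

end AlternatingMap

namespace ExteriorAlgebra

theorem leibniz_ιMulti {R M : Type*} [CommRing R] [AddCommGroup M] [Module R M]
    {d : Module.End R (ExteriorAlgebra R M)} {A : Module.End R M}
    (hι : ∀ v, d (ι R v) = ι R (A v)) (hmul : ∀ x y, d (x * y) = d x * y + x * d y) :
    ∀ {n : ℕ} (X : Fin n → M), d (ιMulti R n X) = ∑ i, ιMulti R n (update X i (A (X i)))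
  | 0, X => by
    have h := hmul 1 1
    simp only [mul_one, one_mul, left_eq_add] at h
    simp [h]
  | n + 1, X => by
    rw [ιMulti_succ_apply, hmul, hι, leibniz_ιMulti hι hmul, Fin.sum_univ_succ, Finset.mul_sum]
    simp only [ιMulti_succ_apply, update_self]
    congr 2 with i
    rw [update_of_ne (Fin.succ_ne_zero i).symm]
    exact congrArg (_ * ιMulti R n ·) (Fin.tail_update_succ X i _).symm

variable {K W : Type*} [Field K] [AddCommGroup W] [Module K W]

theorem mem_span_of_sum_ιMulti_update_eq_zero {n : ℕ} {X v : Fin n → W}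
    (hX : LinearIndependent K X) (h : ∑ j, ιMulti K n (update X j (v j)) = 0) (i : Fin n) :
    v i ∈ span K (Set.range X) := by
  by_contra hv
  set b := Module.Basis.span hX
  -- `M` kills `X i`, fixes the other `X j` and sends `v i` to the missing basis vector `b i`,
  -- so the `n`-form `b.det ∘ M` vanishes on every summand of `h` except the `i`-th, where it is 1.
  obtain ⟨M, hMX, hMv⟩ := LinearMap.exists_extend_of_notMem (b.constr K (update b i 0)) hv (b i)
  have hM : M ∘ X = update b i 0 := by
    funext j
    have := congr($hMX (b j))
    rwa [Module.Basis.constr_basis, LinearMap.comp_apply, Submodule.subtype_apply,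
      Module.Basis.span_apply] at this
  let F : W [⋀^Fin n]→ₗ[K] K := b.det.compLinearMap M
  have hF : ∀ j, F (update X j (v j)) = if j = i then 1 else 0 := by
    intro j
    split_ifs with hji
    · subst hji
      change b.det (M ∘ update X j (v j)) = 1
      rw [comp_update, hM, update_idem, hMv, update_eq_self, Module.Basis.det_self]
    · change b.det (M ∘ update X j (v j)) = 0
      refine b.det.map_coord_zero i ?_
      rw [comp_update, update_of_ne (Ne.symm hji), hM, update_self]
  have := congr(liftAlternating (Pi.single n F) $h)
  simp [liftAlternating_apply_ιMulti, hF] at this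

end ExteriorAlgebra

namespace LinearMap.IsSkewAdjoint

section CommRing

variable {R M : Type*} [CommRing R] [AddCommGroup M] [Module R M]
variable {B : LinearMap.BilinForm R M} {T : Module.End R M}

theorem restrict (hT : IsSkewAdjoint B T) {P : Submodule R M} (hP : ∀ x ∈ P, T x ∈ P) :
    IsSkewAdjoint (B.restrict P) (T.restrict hP) := fun x y => by
  simpa using hT x y

theorem mapsTo_orthogonal (hT : IsSkewAdjoint B T) {P : Submodule R M} (hP : ∀ x ∈ P, T x ∈ P) :
    ∀ x ∈ B.orthogonal P, T x ∈ B.orthogonal P := by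
  intro x hx
  rw [LinearMap.BilinForm.mem_orthogonal_iff] at hx ⊢
  intro y hy
  have := hT y x
  simp only [Pi.neg_apply, map_neg] at this
  exact neg_eq_zero.mp (this.symm.trans (hx _ (hP y hy)))

end CommRing

theorem trace_eq_zero {K W : Type*} [Field K] [CharZero K] [AddCommGroup W] [Module K W]
    [FiniteDimensional K W] {B : LinearMap.BilinForm K W} (hB : B.Nondegenerate)
    {T : Module.End K W} (hT : IsSkewAdjoint B T) : trace K W T = 0 := by
  have hconj : (B.toDual hB).conj (-T) = Module.Dual.transpose (R := K) T := by
    ext φ x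
    obtain ⟨y, rfl⟩ := (B.toDual hB).surjective φ
    simp [LinearEquiv.conj_apply, LinearMap.BilinForm.toDual_def,
      Module.Dual.transpose_apply, hT y x]
  have h := trace_conj' (-T) (B.toDual hB)
  rw [hconj, trace_transpose', map_neg] at h
  exact self_eq_neg.mp h

end LinearMap.IsSkewAdjoint

theorem IsSkew.isSkewAdjoint {W : Type} [AddCommGroup W] [Module ℝ W]
    {η : LinearMap.BilinForm ℝ W} {A : Module.End ℝ W} (hA : IsSkew W η A) :
    LinearMap.IsSkewAdjoint η A := fun v w => by
  simpa [eq_neg_iff_add_eq_zero] using hA v w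

theorem stmt_12
    (η : LinearMap.BilinForm ℝ V)
    (D : Module.End ℝ V → Module.End ℝ (ExteriorAlgebra ℝ V)) (hD : IsDerAction V D)
    (x₁ x₂ x₃ x₄ : V)
    (φ : ExteriorAlgebra ℝ V)
    (hφ : φ = ExteriorAlgebra.ι ℝ x₁ * ExteriorAlgebra.ι ℝ x₂ *
      ExteriorAlgebra.ι ℝ x₃ * ExteriorAlgebra.ι ℝ x₄)
    (hφ0 : φ ≠ 0)
    (hnd : (η.restrict (Submodule.span ℝ {x₁, x₂, x₃, x₄})).Nondegenerate) :
    ∀ A : Module.End ℝ V, IsSkew V η A →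
      (D A φ = 0 ↔
        ((∀ x ∈ Submodule.span ℝ {x₁, x₂, x₃, x₄}, A x ∈ Submodule.span ℝ {x₁, x₂, x₃, x₄}) ∧
         (∀ x ∈ η.orthogonal (Submodule.span ℝ {x₁, x₂, x₃, x₄}),
            A x ∈ η.orthogonal (Submodule.span ℝ {x₁, x₂, x₃, x₄})))) := by
  intro A hA
  set X : Fin 4 → V := ![x₁, x₂, x₃, x₄]
  have hrange : Set.range X = {x₁, x₂, x₃, x₄} := by
    simp only [X, Matrix.range_cons, Matrix.range_empty, Set.union_empty, Set.singleton_union]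
  have hφX : φ = ιMulti ℝ 4 X := by simp [hφ, X, ιMulti_apply, mul_assoc]
  have hX : LinearIndependent ℝ X := by
    by_contra h
    exact hφ0 (hφX.trans ((ιMulti ℝ 4).map_linearDependent X h))
  have hDφ : D A φ = ∑ i, ιMulti ℝ 4 (update X i (A (X i))) :=
    hφX ▸ leibniz_ιMulti (hD A).1 (hD A).2.2 X
  have : FiniteDimensional ℝ (span ℝ (Set.range X)) := .span_of_finite ℝ (Set.finite_range X)
  rw [← hrange] at hnd ⊢
  rw [hDφ]
  constructor
  · intro h0
    have hP : span ℝ (Set.range X) ≤ (span ℝ (Set.range X)).comap A :=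
      span_le.mpr (Set.range_subset_iff.mpr (mem_span_of_sum_ιMulti_update_eq_zero hX h0))
    exact ⟨fun x hx => hP hx, hA.isSkewAdjoint.mapsTo_orthogonal fun x hx => hP hx⟩
  · rintro ⟨hP, -⟩
    rw [(ιMulti ℝ 4).sum_map_update_of_mapsTo_span hX hP,
      (hA.isSkewAdjoint.restrict hP).trace_eq_zero hnd, zero_smul]
end
end

section
/- For each p ∈ {1, 2, 5}: if a p-form ζ ∈ ΛᵖV satisfies ⟨s, ρ(ζ̂)s⟩ = 0 for all s ∈ S, then ζ = 0. -/
/-!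
The adjoint of `ρ x` for `⟨-,-⟩` is `ρ (star x)`, where `star` is Clifford conjugation (reversion
composed with the grade involution): on generators this is the hypothesis on `⟨-,-⟩`, and both
sides are anti-multiplicative. On `p`-vectors `star` is the sign `(-1) ^ (p + p(p-1)/2)`, which is
`-1` for `p = 1, 2, 5`. So `A = ρ ζ̂` is skew for the alternating form, `(s, t) ↦ ⟨s, A t⟩` is
symmetric and vanishes on the diagonal, hence vanishes, and nondegeneracy gives `A = 0`.

It remains that `ρ` is injective on `ΛᵖV`. For an ordered `p`-subset `I` of the orthonormal basis
let `e_I` be the Clifford product of its vectors. For `I ≠ J`, a basis vector lying in exactly one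
of `I`, `J` anticommutes with `rev(e_I) e_J` and squares to a nonzero scalar, so
`tr ρ(rev(e_I) e_J) = 0`; while `tr ρ(rev(e_I) e_I) = 32 · ∏_{i ∈ I} Q(e i) ≠ 0`. Hence
`tr ρ(rev(e_I) ζ̂)` is a nonzero multiple of the `I`-th coordinate of `ζ`.
-/
noncomputable section

variable (V : Type) [AddCommGroup V] [Module ℝ V]

/-- `hat η θ` is the image of `θ ∈ ΛV` under the inverse of the canonical linear
isomorphism `Cl(V) ≅ ΛV` (Mathlib's `CliffordAlgebra.equivExterior`). -/
def hat (η : LinearMap.BilinForm ℝ V) (θ : ExteriorAlgebra ℝ V) : CliffordAlgebra (Qf V η) :=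
  (CliffordAlgebra.equivExterior (Qf V η)).symm θ

namespace CliffordAlgebra

variable {R M I : Type*} [CommRing R] [AddCommGroup M] [Module R M]

variable (Q : QuadraticForm R M) (e : I → M)

def monomial (L : List I) : CliffordAlgebra Q := ((L.map e).map (ι Q)).prod

@[simp] lemma monomial_nil : monomial Q e [] = 1 := rfl

@[simp] lemma monomial_cons (i : I) (L : List I) :
    monomial Q e (i :: L) = ι Q (e i) * monomial Q e L := rfl

lemma reverse_monomial (L : List I) : reverse (monomial Q e L) = monomial Q e L.reverse := by
  rw [monomial, monomial, reverse_prod_map_ι, List.map_reverse, List.map_reverse]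

lemma reverse_monomial_mul_self (L : List I) :
    reverse (monomial Q e L) * monomial Q e L = algebraMap R _ (L.map fun i => Q (e i)).prod := by
  induction L with
  | nil => simp
  | cons i L ih =>
    rw [monomial_cons, reverse.map_mul, reverse_ι, mul_assoc, ← mul_assoc (ι Q (e i)), ι_sq_scalar,
      Algebra.commutes, ← mul_assoc, ih, ← map_mul, List.map_cons, List.prod_cons, mul_comm]

lemma contractLeft_monomial {d : Module.Dual R M} {L : List I} (h : ∀ i ∈ L, d (e i) = 0) :
    contractLeft d (monomial Q e L) = 0 := by
  induction L with
  | nil => exact contractLeft_one (Q := Q) d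
  | cons i L ih =>
    rw [monomial_cons, contractLeft_ι_mul, h i List.mem_cons_self,
      ih fun j hj => h j (List.mem_cons_of_mem i hj), zero_smul, mul_zero, sub_zero]

variable {Q e} (he : Pairwise fun i j => Q.IsOrtho (e i) (e j))
include he

lemma equivExterior_symm_prod_ι [Invertible (2 : R)] {L : List I} (hL : L.Nodup) :
    (equivExterior Q).symm ((L.map e).map (ExteriorAlgebra.ι R)).prod = monomial Q e L := by
  induction L with
  | nil => exact changeForm_one (changeForm.neg_proof changeForm.associated_neg_proof)
  | cons i L ih =>
    rw [List.nodup_cons] at hL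
    have hortho : ∀ j ∈ L, (-QuadraticMap.associated (R := R) (-Q)) (e i) (e j) = 0 := by
      intro j hj
      have hij : i ≠ j := fun h => hL.1 (h ▸ hj)
      have h : (-Q).IsOrtho (e i) (e j) := by
        rw [QuadraticMap.isOrtho_def, neg_apply, QuadraticMap.isOrtho_def.mp (he hij)]
        exact neg_add _ _
      rw [LinearMap.neg_apply, LinearMap.neg_apply, QuadraticMap.associated_isOrtho.mpr h, neg_zero]
    rw [List.map_cons, List.map_cons, List.prod_cons]
    erw [changeForm_ι_mul (changeForm.neg_proof changeForm.associated_neg_proof), ih hL.2]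
    rw [contractLeft_monomial Q e hortho, sub_zero, monomial_cons]

lemma ι_mul_monomial [DecidableEq I] (i : I) (L : List I) :
    ι Q (e i) * monomial Q e L =
      (-1 : R) ^ (L.length + L.count i) • (monomial Q e L * ι Q (e i)) := by
  induction L with
  | nil => simp
  | cons j L ih =>
    rw [monomial_cons, List.length_cons]
    by_cases hji : j = i
    · subst hji
      conv_lhs => rw [ih, mul_smul_comm, ← mul_assoc]
      rw [List.count_cons_self]
      congr 1
      ring
    · rw [List.count_cons_of_ne hji, ← mul_assoc, ι_mul_ι_comm_of_isOrtho (he (Ne.symm hji)),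
        neg_mul, mul_assoc, ih, mul_smul_comm, ← mul_assoc, ← neg_smul]
      congr 1
      ring

lemma ι_mul_monomial_mul_monomial [DecidableEq I] (i : I) (L L' : List I) :
    ι Q (e i) * (monomial Q e L * monomial Q e L') =
      (-1 : R) ^ (L.length + L.count i + (L'.length + L'.count i)) •
        (monomial Q e L * monomial Q e L' * ι Q (e i)) := by
  rw [← mul_assoc, ι_mul_monomial he, smul_mul_assoc, mul_assoc, ι_mul_monomial he, mul_smul_comm,
    smul_smul, ← pow_add, mul_assoc]

lemma reverse_monomial_of_nodup {L : List I} (hL : L.Nodup) :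
    reverse (monomial Q e L) = (-1 : R) ^ L.length.choose 2 • monomial Q e L := by
  classical
  induction L with
  | nil => simp
  | cons i L ih =>
    rw [List.nodup_cons] at hL
    have hcomm :
        monomial Q e L * ι Q (e i) = (-1 : R) ^ L.length • (ι Q (e i) * monomial Q e L) := by
      rw [ι_mul_monomial he, List.count_eq_zero_of_not_mem hL.1, add_zero, smul_smul, ← pow_add,
        Even.neg_one_pow ⟨_, rfl⟩, one_smul]
    rw [monomial_cons, reverse.map_mul, reverse_ι, ih hL.2, smul_mul_assoc, hcomm, smul_smul,
      ← pow_add, List.length_cons, Nat.choose_succ_succ', Nat.choose_one_right, add_comm]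

lemma star_monomial_of_nodup {L : List I} (hL : L.Nodup) :
    star (monomial Q e L) = (-1 : R) ^ (L.length + L.length.choose 2) • monomial Q e L := by
  rw [star_def', reverse_monomial_of_nodup he hL, map_smul, monomial, involute_prod_map_ι,
    ← monomial, smul_smul, ← pow_add, List.length_map, add_comm]

end CliffordAlgebra

namespace Set.powersetCard

variable {I : Type*} [LinearOrder I] {n : ℕ}

def sortedList (s : powersetCard I n) : List I := List.ofFn (ofFinEmbEquiv.symm s)

lemma nodup_sortedList (s : powersetCard I n) : (sortedList s).Nodup :=
  List.nodup_ofFn.mpr (ofFinEmbEquiv.symm s).injective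

@[simp] lemma length_sortedList (s : powersetCard I n) : (sortedList s).length = n :=
  List.length_ofFn

@[simp] lemma mem_sortedList {s : powersetCard I n} {i : I} : i ∈ sortedList s ↔ i ∈ s := by
  rw [sortedList, List.mem_ofFn', mem_range_ofFinEmbEquiv_symm_iff_mem]

end Set.powersetCard

open CliffordAlgebra Module Set.powersetCard

lemma ExteriorAlgebra.ιMulti_family_eq_prod {I R M : Type*} [LinearOrder I] [CommRing R]
    [AddCommGroup M] [Module R M] (e : I → M) {n : ℕ} (s : Set.powersetCard I n) :
    ExteriorAlgebra.ιMulti_family R n e s =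
      (((sortedList s).map e).map (ExteriorAlgebra.ι R)).prod := by
  simp only [ExteriorAlgebra.ιMulti_family, ExteriorAlgebra.ιMulti_apply, sortedList,
    List.map_ofFn]
  rfl

section Representation

variable {R M S I : Type*} [CommRing R] [AddCommGroup M] [Module R M] {Q : QuadraticForm R M}
  [AddCommGroup S] [Module R S] (ρ : CliffordAlgebra Q →ₐ[R] Module.End R S)

theorem bilinForm_rep_apply_left_eq_star {ω : LinearMap.BilinForm R S}
    (hωι : ∀ (v : M) (s t : S), ω (ρ (ι Q v) s) t = -ω s (ρ (ι Q v) t)) (x : CliffordAlgebra Q)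
    (s t : S) : ω (ρ x s) t = ω s (ρ (star x) t) := by
  induction x using CliffordAlgebra.induction generalizing s t with
  | algebraMap r => simp [Algebra.algebraMap_eq_smul_one]
  | ι v => rw [hωι, star_ι, map_neg, LinearMap.neg_apply, map_neg]
  | mul a b ha hb =>
    rw [map_mul, Module.End.mul_apply, ha, hb, star_mul, map_mul, Module.End.mul_apply]
  | add a b ha hb =>
    rw [map_add, LinearMap.add_apply, map_add, LinearMap.add_apply, ha, hb, star_add, map_add,
      LinearMap.add_apply, map_add]

lemma trace_rep_reverse_monomial_mul_self [Module.Free R S] [Module.Finite R S] (e : I → M)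
    (L : List I) :
    LinearMap.trace R S (ρ (reverse (monomial Q e L) * monomial Q e L)) =
      finrank R S * (L.map fun i => Q (e i)).prod := by
  rw [reverse_monomial_mul_self, AlgHom.commutes, Algebra.algebraMap_eq_smul_one, map_smul,
    LinearMap.trace_one, smul_eq_mul, mul_comm]

end Representation

theorem star_equivExterior_symm_of_mem_exteriorPower {R M I : Type*} [CommRing R]
    [Invertible (2 : R)] [AddCommGroup M] [Module R M] {Q : QuadraticForm R M} [LinearOrder I]
    (e : Basis I R M) (he : Pairwise fun i j => Q.IsOrtho (e i) (e j)) {n : ℕ}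
    {x : ExteriorAlgebra R M} (hx : x ∈ ⋀[R]^n M) :
    star ((equivExterior Q).symm x) = (-1 : R) ^ (n + n.choose 2) • (equivExterior Q).symm x := by
  rw [← exteriorPower.ιMulti_family_span_fixedDegree_of_span R e.span_eq] at hx
  induction hx using Submodule.span_induction with
  | mem x hx =>
    obtain ⟨s, rfl⟩ := hx
    rw [ExteriorAlgebra.ιMulti_family_eq_prod, equivExterior_symm_prod_ι he (nodup_sortedList s),
      star_monomial_of_nodup he (nodup_sortedList s), length_sortedList]
  | zero => simp
  | add x y _ _ hx hy => rw [map_add, star_add, hx, hy, smul_add]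
  | smul r x _ hx => rw [map_smul, CliffordAlgebra.star_smul, hx, smul_comm]

theorem LinearMap.BilinForm.eq_zero_of_isSkew_of_apply_self_eq_zero {K S : Type*} [Field K]
    [CharZero K] [AddCommGroup S] [Module K S] {ω : LinearMap.BilinForm K S} (hω : ω.IsAlt)
    (hω_nd : ω.SeparatingRight) {A : Module.End K S}
    (hA_skew : ∀ s t, ω (A s) t = -ω s (A t)) (hA : ∀ s, ω s (A s) = 0) : A = 0 := by
  ext t
  refine hω_nd _ fun s => ?_
  have hsym : ω t (A s) = ω s (A t) := by rw [← hω.neg_eq, hA_skew, neg_neg]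
  have h := hA (s + t)
  simp only [map_add, LinearMap.add_apply, hA, hsym, zero_add, add_zero] at h
  exact add_self_eq_zero.mp h

section Trace

variable {K M S I : Type*} [Field K] [CharZero K] [AddCommGroup M] [Module K M]
  {Q : QuadraticForm K M} [AddCommGroup S] [Module K S]

theorem LinearMap.trace_eq_zero_of_mul_eq_neg_mul {U A : Module.End K S} {q : K} (hq : q ≠ 0)
    (hU : U * U = q • 1) (hUA : U * A = -(A * U)) : LinearMap.trace K S A = 0 := by
  have h₁ : LinearMap.trace K S (U * A * U) = q * LinearMap.trace K S A := by
    rw [LinearMap.trace_mul_comm, ← mul_assoc, hU, smul_mul_assoc, one_mul, map_smul, smul_eq_mul]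
  have h₂ : LinearMap.trace K S (U * A * U) = -(q * LinearMap.trace K S A) := by
    rw [hUA, neg_mul, mul_assoc, hU, mul_smul_comm, mul_one, map_neg, map_smul, smul_eq_mul]
  exact (mul_eq_zero.mp (self_eq_neg.mp (h₁.symm.trans h₂))).resolve_left hq

variable [LinearOrder I] {e : I → M} (ρ : CliffordAlgebra Q →ₐ[K] Module.End K S)

lemma trace_rep_reverse_monomial_mul_monomial_of_ne
    (he : Pairwise fun i j => Q.IsOrtho (e i) (e j)) (hQ : ∀ i, Q (e i) ≠ 0) {n : ℕ}
    {s t : Set.powersetCard I n} (hst : s ≠ t) :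
    LinearMap.trace K S
      (ρ (reverse (monomial Q e (sortedList s)) * monomial Q e (sortedList t))) = 0 := by
  obtain ⟨j, hjs, hjt⟩ := (exists_mem_notMem_iff_ne s t).mp hst
  have hcount_s : (sortedList s).reverse.count j = 1 := by
    rw [List.count_reverse]
    exact List.count_eq_one_of_mem (nodup_sortedList s) (mem_sortedList.mpr hjs)
  have hcount_t : (sortedList t).count j = 0 :=
    List.count_eq_zero_of_not_mem (mt mem_sortedList.mp hjt)
  refine LinearMap.trace_eq_zero_of_mul_eq_neg_mul (U := ρ (ι Q (e j))) (hQ j) ?_ ?_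
  · rw [← map_mul, ι_sq_scalar, AlgHom.commutes, Algebra.algebraMap_eq_smul_one]
  · rw [← map_mul, ← map_mul, reverse_monomial, ι_mul_monomial_mul_monomial he, hcount_s,
      hcount_t, List.length_reverse, length_sortedList, length_sortedList,
      Odd.neg_one_pow ⟨n, by ring⟩, neg_one_smul, map_neg]

variable [FiniteDimensional K S]

theorem trace_rep_reverse_monomial_mul_equivExterior_symm (e : Basis I K M)
    (he : Pairwise fun i j => Q.IsOrtho (e i) (e j)) (hQ : ∀ i, Q (e i) ≠ 0) {n : ℕ}
    (s : Set.powersetCard I n) (x : ⋀[K]^n M) :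
    LinearMap.trace K S (ρ (reverse (monomial Q e (sortedList s)) * (equivExterior Q).symm x)) =
      finrank K S * ((sortedList s).map fun i => Q (e i)).prod * (e.exteriorPower n).repr x s := by
  let f : ⋀[K]^n M →ₗ[K] K := LinearMap.trace K S ∘ₗ ρ.toLinearMap ∘ₗ
    LinearMap.mulLeft K (reverse (monomial Q e (sortedList s))) ∘ₗ
    (equivExterior Q).symm.toLinearMap ∘ₗ (⋀[K]^n M).subtype
  have hf : f = (finrank K S * ((sortedList s).map fun i => Q (e i)).prod) •
      (e.exteriorPower n).coord s := by
    refine (e.exteriorPower n).ext fun t => ?_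
    simp only [f, LinearMap.comp_apply, Submodule.subtype_apply, exteriorPower.basis_apply,
      exteriorPower.ιMulti_family_apply_coe, ExteriorAlgebra.ιMulti_family_eq_prod,
      LinearEquiv.coe_coe, equivExterior_symm_prod_ι he (nodup_sortedList t),
      LinearMap.mulLeft_apply, AlgHom.toLinearMap_apply, LinearMap.smul_apply, Basis.coord_apply,
      smul_eq_mul]
    by_cases hts : t = s
    · subst hts
      rw [trace_rep_reverse_monomial_mul_self, exteriorPower.basis_repr_self, mul_one]
    · rw [trace_rep_reverse_monomial_mul_monomial_of_ne ρ he hQ (Ne.symm hts),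
        exteriorPower.basis_repr_ne _ _ _ hts, mul_zero]
  exact LinearMap.congr_fun hf x

theorem eq_zero_of_rep_equivExterior_symm_eq_zero [Nontrivial S] (e : Basis I K M)
    (he : Pairwise fun i j => Q.IsOrtho (e i) (e j)) (hQ : ∀ i, Q (e i) ≠ 0) {n : ℕ}
    {x : ExteriorAlgebra K M} (hx : x ∈ ⋀[K]^n M) (h0 : ρ ((equivExterior Q).symm x) = 0) :
    x = 0 := by
  suffices (⟨x, hx⟩ : ⋀[K]^n M) = 0 from congrArg Subtype.val this
  refine (e.exteriorPower n).ext_elem fun s => ?_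
  have h := trace_rep_reverse_monomial_mul_equivExterior_symm ρ e he hQ s ⟨x, hx⟩
  rw [map_mul, h0, mul_zero, map_zero, eq_comm] at h
  have hc : (finrank K S : K) * ((sortedList s).map fun i => Q (e i)).prod ≠ 0 :=
    mul_ne_zero (Nat.cast_ne_zero.mpr finrank_pos.ne')
      (List.prod_ne_zero (by simpa [eq_comm] using fun i (_ : i ∈ s) => hQ i))
  rw [map_zero, Finsupp.zero_apply]
  exact (mul_eq_zero.mp h).resolve_left hc

end Trace

section Lorentzian

variable {V} {η : LinearMap.BilinForm ℝ V} {e : Module.Basis (Fin 11) ℝ V}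

lemma IsLorentzianBasis.pairwise_isOrtho (he : IsLorentzianBasis V η e) :
    Pairwise fun i j => (Qf V η).IsOrtho (e i) (e j) := by
  intro i j hij
  rw [QuadraticMap.isOrtho_def]
  simp only [Qf, LinearMap.BilinMap.toQuadraticMap_apply, LinearMap.neg_apply, map_add,
    LinearMap.add_apply, he i j, he j i, if_neg hij, if_neg (Ne.symm hij)]
  ring

lemma IsLorentzianBasis.Qf_apply_ne_zero (he : IsLorentzianBasis V η e) (i : Fin 11) :
    Qf V η (e i) ≠ 0 := by
  simp only [Qf, LinearMap.BilinMap.toQuadraticMap_apply, LinearMap.neg_apply, he i i]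
  split_ifs <;> norm_num

end Lorentzian

theorem stmt_14
    (η : LinearMap.BilinForm ℝ V) (e : Module.Basis (Fin 11) ℝ V) (he : IsLorentzianBasis V η e)
    (S : Type) [AddCommGroup S] [Module ℝ S] (hdimS : Module.finrank ℝ S = 32)
    (ρ : CliffordAlgebra (Qf V η) →ₐ[ℝ] Module.End ℝ S)
    (ω : LinearMap.BilinForm ℝ S) (hω_alt : ∀ s : S, ω s s = 0)
    (hω_nd : ω.Nondegenerate)
    (hωι : ∀ (v : V) (s t : S),
      ω (ρ (CliffordAlgebra.ι (Qf V η) v) s) t = - ω s (ρ (CliffordAlgebra.ι (Qf V η) v) t))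
    :
    ∀ p : ℕ, (p = 1 ∨ p = 2 ∨ p = 5) →
      ∀ ζ ∈ ⋀[ℝ]^p V, (∀ s : S, ω s (ρ (hat V η ζ) s) = 0) → ζ = 0 := by
  intro p hp ζ hζ h0
  have hsign : (-1 : ℝ) ^ (p + p.choose 2) = -1 := by
    rcases hp with rfl | rfl | rfl <;> norm_num [Nat.choose]
  have hskew : ∀ s t, ω (ρ (hat V η ζ) s) t = -ω s (ρ (hat V η ζ) t) := fun s t => by
    rw [bilinForm_rep_apply_left_eq_star ρ hωι, hat,
      star_equivExterior_symm_of_mem_exteriorPower e he.pairwise_isOrtho hζ, hsign, neg_one_smul,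
      map_neg, LinearMap.neg_apply, map_neg]
  have : FiniteDimensional ℝ S := Module.finite_of_finrank_eq_succ hdimS
  have : Nontrivial S := Module.nontrivial_of_finrank_eq_succ hdimS
  exact eq_zero_of_rep_equivExterior_symm_eq_zero ρ e he.pairwise_isOrtho he.Qf_apply_ne_zero hζ
    (LinearMap.BilinForm.eq_zero_of_isSkew_of_apply_self_eq_zero hω_alt hω_nd.2 hskew h0)
end
end

section
/- For every s ∈ S, the Dirac current v = κ(s,s) ∈ V satisfies η(v,v) ≥ 0 (it is either null or timelike); moreover, there exists s ∈ S with η(κ(s,s), κ(s,s)) > 0. -/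
noncomputable section

variable (V : Type) [AddCommGroup V] [Module ℝ V]

/-!
Averaging over the finite group generated by the gamma matrices `γⱼ = ρ (ι (e j))` gives a
positive definite form `B` on `S` for which `γ₀` is skew and the spatial `γⱼ` are self-adjoint.
Since `ρ` is onto `End S`, Schur's lemma forces `ω = c • B (γ₀ ·) ·` with `c ≠ 0`, hence
`η (κ s s) (κ s s) = c² (B s s ² - ∑ⱼ B (τⱼ s) s ²)`, where `τⱼ = γ₀ γⱼ` (`j ≠ 0`) are ten
anticommuting `B`-self-adjoint involutions. The vectors `τⱼ s` are pairwise orthogonal of the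
length of `s`, so Bessel's inequality makes the current causal. A timelike current comes from
`s = y + x` with `y`, `x` in the `±1`-eigenspaces of `τ₁` and `x` orthogonal to the nine
vectors `τⱼ y`, `j ≥ 2`: each eigenspace has dimension `16 > 9`.
-/

open Module Finset
open LinearMap (BilinForm IsAdjointPair)

namespace LinearMap.BilinForm

variable {S : Type*} [AddCommGroup S] [Module ℝ S]

theorem exists_isSymm_pos [FiniteDimensional ℝ S] :
    ∃ B : BilinForm ℝ S, B.IsSymm ∧ ∀ x, x ≠ 0 → 0 < B x x := by
  let f : S ≃ₗ[ℝ] EuclideanSpace ℝ (Fin (finrank ℝ S)) := LinearEquiv.ofFinrankEq _ _ (by simp)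
  refine ⟨(innerₗ _).compl₁₂ f.toLinearMap f.toLinearMap,
    ⟨fun x y => by simp [real_inner_comm]⟩, fun x hx => ?_⟩
  simpa using real_inner_self_pos.2 (f.map_ne_zero_iff.2 hx)

theorem apply_self_nonneg_of_pos {B : BilinForm ℝ S} (hpos : ∀ x, x ≠ 0 → 0 < B x x) (x : S) :
    0 ≤ B x x := by
  rcases eq_or_ne x 0 with rfl | hx
  · simp
  · exact (hpos x hx).le

theorem isOrthogonal_mul_self {B : BilinForm ℝ S} {r : Module.End ℝ S}
    (hr : r * r = 1 ∨ r * r = -1) : B.IsOrthogonal (r * r) := by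
  rcases hr with hr | hr <;> simp [hr, LinearMap.IsOrthogonal]

/-- Averaging over the group generated by the `r i`, one generator at a time: adding the pullback
by `r a` makes the form `r a`-invariant because `r a * r a = ± 1`, and it keeps the invariance
under the previous generators because these anticommute with `r a`. -/
theorem exists_isSymm_pos_isOrthogonal {ι : Type*} [FiniteDimensional ℝ S]
    (r : ι → Module.End ℝ S) (hsq : ∀ i, r i * r i = 1 ∨ r i * r i = -1)
    (hanti : ∀ i j, i ≠ j → r i * r j = -(r j * r i)) (J : Finset ι) :
    ∃ B : BilinForm ℝ S, B.IsSymm ∧ (∀ x, x ≠ 0 → 0 < B x x) ∧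
      ∀ i ∈ J, B.IsOrthogonal (r i) := by
  classical
  induction J using Finset.induction_on with
  | empty =>
    obtain ⟨B, hB, hpos⟩ := exists_isSymm_pos (S := S)
    exact ⟨B, hB, hpos, by simp⟩
  | insert a J haJ ih =>
    obtain ⟨B, hB, hpos, horth⟩ := ih
    refine ⟨B + B.compl₁₂ (r a) (r a), hB.add ⟨fun x y => hB.eq _ _⟩, fun x hx => ?_, ?_⟩
    · exact add_pos_of_pos_of_nonneg (hpos x hx) (apply_self_nonneg_of_pos hpos _)
    · intro i hi x y
      rcases Finset.mem_insert.1 hi with rfl | hiJ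
      · have h := isOrthogonal_mul_self (B := B) (hsq i) x y
        simp only [Module.End.mul_apply] at h
        simp only [add_apply, compl₁₂_apply, h, add_comm]
      · have hia : a ≠ i := fun h => haJ (h ▸ hiJ)
        have h := congrArg (fun f : Module.End ℝ S => f x) (hanti a i hia)
        have h' := congrArg (fun f : Module.End ℝ S => f y) (hanti a i hia)
        simp only [Module.End.mul_apply, LinearMap.neg_apply] at h h'
        simp only [add_apply, compl₁₂_apply, h, h', map_neg, LinearMap.neg_apply, neg_neg]
        rw [horth i hiJ, horth i hiJ]

theorem _root_.LinearMap.IsOrthogonal.isAdjointPair_of_mul_self_eq_one {B : BilinForm ℝ S}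
    {r : Module.End ℝ S} (h : B.IsOrthogonal r) (hr : r * r = 1) :
    IsAdjointPair B B r r := fun x y => by
  have hy : r (r y) = y := by rw [← Module.End.mul_apply, hr, Module.End.one_apply]
  conv_lhs => rw [← hy, h]

theorem _root_.LinearMap.IsOrthogonal.isAdjointPair_of_mul_self_eq_neg_one {B : BilinForm ℝ S}
    {r : Module.End ℝ S} (h : B.IsOrthogonal r) (hr : r * r = -1) :
    IsAdjointPair B B r (-r : Module.End ℝ S) := fun x y => by
  have hy : r (-r y) = y := by
    rw [map_neg, ← Module.End.mul_apply, hr, LinearMap.neg_apply, neg_neg, Module.End.one_apply]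
  conv_lhs => rw [← hy, h]
  rfl

theorem Nondegenerate.comp_of_bijective {B : BilinForm ℝ S} (hB : B.Nondegenerate)
    {f : Module.End ℝ S} (hf : Function.Bijective f) : (B ∘ₗ f).Nondegenerate :=
  ⟨fun x hx => hf.1 (by rw [map_zero]; exact hB.1 _ hx),
    fun y hy => hB.2 y fun z => by obtain ⟨x, rfl⟩ := hf.2 z; exact hy x⟩

theorem exists_eq_smul_of_isAdjointPair [FiniteDimensional ℝ S] {B₀ B : BilinForm ℝ S}
    (hB₀ : B₀.Nondegenerate) {T : Set (Module.End ℝ S)} (hT : Algebra.adjoin ℝ T = ⊤)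
    (hadj : ∀ f ∈ T, ∃ g, IsAdjointPair B₀ B₀ f g ∧ IsAdjointPair B B f g) :
    ∃ c : ℝ, B = c • B₀ := by
  set M := B.symmCompOfNondegenerate B₀ hB₀
  have hM : ∀ x y, B₀ (M x) y = B x y := fun x y => symmCompOfNondegenerate_left_apply _ _ _ _
  have hT_le : T ⊆ Subalgebra.centralizer ℝ {M} := by
    rintro f hf _ rfl
    obtain ⟨g, hg₀, hg⟩ := hadj f hf
    ext x
    refine sub_eq_zero.1 (hB₀.1 _ fun y => ?_)
    rw [Module.End.mul_apply, Module.End.mul_apply, map_sub, LinearMap.sub_apply, hM, hg, ← hM,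
      ← hg₀, sub_self]
  have hcenter : M ∈ Subalgebra.center ℝ (Module.End ℝ S) :=
    Subalgebra.mem_center_iff.2 fun f =>
      (Algebra.adjoin_le hT_le (hT ▸ Algebra.mem_top : f ∈ Algebra.adjoin ℝ T)) M rfl |>.symm
  rw [Algebra.IsCentral.center_eq_bot] at hcenter
  obtain ⟨c, hc⟩ := Algebra.mem_bot.1 hcenter
  refine ⟨c, LinearMap.ext₂ fun x y => ?_⟩
  rw [← hM, ← hc]
  simp [Algebra.algebraMap_eq_smul_one]

theorem apply_eq_zero_of_isAdjointPair {B : BilinForm ℝ S} {T : Module.End ℝ S}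
    (hT : IsAdjointPair B B T T) {y x : S} (hy : T y = y) (hx : T x = -x) : B y x = 0 := by
  have h := hT y x
  rw [hy, hx, map_neg] at h
  linarith

structure IsCliffordSystem {ι : Type*} (B : BilinForm ℝ S) (J : Finset ι)
    (τ : ι → Module.End ℝ S) : Prop where
  isAdjointPair : ∀ i ∈ J, IsAdjointPair B B (τ i) (τ i)
  mul_self : ∀ i ∈ J, τ i * τ i = 1
  anticomm : ∀ i ∈ J, ∀ j ∈ J, i ≠ j → τ i * τ j = -(τ j * τ i)

namespace IsCliffordSystem

variable {ι : Type*} {B : BilinForm ℝ S} {J : Finset ι} {τ : ι → Module.End ℝ S}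

theorem apply_apply (h : IsCliffordSystem B J τ) {i : ι} (hi : i ∈ J) (x : S) :
    τ i (τ i x) = x := by
  rw [← Module.End.mul_apply, h.mul_self i hi, Module.End.one_apply]

theorem apply_anticomm (h : IsCliffordSystem B J τ) {i j : ι} (hi : i ∈ J) (hj : j ∈ J)
    (hij : i ≠ j) (x : S) : τ i (τ j x) = -τ j (τ i x) := by
  rw [← Module.End.mul_apply, h.anticomm i hi j hj hij]
  rfl

theorem isOrthogonal (h : IsCliffordSystem B J τ) {i : ι} (hi : i ∈ J) :
    B.IsOrthogonal (τ i) := fun x y => by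
  rw [h.isAdjointPair i hi, h.apply_apply hi]

theorem apply_apply_eq_zero (h : IsCliffordSystem B J τ) (hB : B.IsSymm) {i j : ι} (hi : i ∈ J)
    (hj : j ∈ J) (hij : i ≠ j) (x : S) : B (τ i x) (τ j x) = 0 := by
  have h₁ : B (τ i x) (τ j x) = -B (τ j x) (τ i x) := by
    rw [h.isAdjointPair i hi, h.apply_anticomm hi hj hij, map_neg, ← h.isAdjointPair j hj]
  rw [hB.eq (τ j x)] at h₁
  linarith

theorem sum_sq_le (h : IsCliffordSystem B J τ) (hB : B.IsSymm) (hpos : ∀ x, 0 ≤ B x x) (s : S) :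
    ∑ i ∈ J, B (τ i s) s ^ 2 ≤ B s s ^ 2 := by
  set u : ι → ℝ := fun i => B (τ i s) s
  set m := ∑ i ∈ J, u i ^ 2
  set w := ∑ i ∈ J, u i • τ i s
  have hw : ∀ y, B w y = ∑ i ∈ J, u i * B (τ i s) y := fun y => by
    simp [w, LinearMap.sum_apply]
  have hτw : ∀ i ∈ J, B (τ i s) w = u i * B s s := by
    intro i hi
    simp only [w, map_sum, map_smul, smul_eq_mul]
    rw [Finset.sum_eq_single i (fun j hj hji => by rw [h.apply_apply_eq_zero hB hi hj hji.symm,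
      mul_zero]) (fun hi' => absurd hi hi'), h.isOrthogonal hi]
  have hws : B w s = m := by simp only [hw, m, u, sq]
  have hww : B w w = m * B s s := by
    rw [hw, Finset.sum_congr rfl fun i hi => by rw [hτw i hi, ← mul_assoc, ← sq],
      ← Finset.sum_mul]
  have hcs := B.apply_sq_le_of_symm hpos (isSymm_iff.1 hB) w s
  rw [hws, hww] at hcs
  by_cases hm : m = 0
  · rw [hm]
    positivity
  · have : 0 < m := lt_of_le_of_ne (Finset.sum_nonneg fun i _ => sq_nonneg (u i)) (Ne.symm hm)
    nlinarith

theorem sq_sub_sum_sq_of_eigen [DecidableEq ι] (h : IsCliffordSystem B J τ) (hB : B.IsSymm)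
    {i : ι} (hi : i ∈ J) {y x : S} (hy : τ i y = y) (hx : τ i x = -x) :
    B (y + x) (y + x) ^ 2 - ∑ j ∈ J, B (τ j (y + x)) (y + x) ^ 2 =
      4 * (B y y * B x x - ∑ j ∈ J.erase i, B (τ j y) x ^ 2) := by
  have horth : ∀ {a b : S}, τ i a = a → τ i b = -b → B a b = 0 :=
    apply_eq_zero_of_isAdjointPair (h.isAdjointPair i hi)
  have hyx : B y x = 0 := horth hy hx
  have hxy : B x y = 0 := by rw [hB.eq]; exact hyx
  have hterm : ∀ j ∈ J.erase i, B (τ j (y + x)) (y + x) = 2 * B (τ j y) x := by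
    intro j hj
    obtain ⟨hji, hj⟩ := Finset.mem_erase.1 hj
    have hτy : τ i (τ j y) = -τ j y := by rw [h.apply_anticomm hi hj hji.symm, hy]
    have hτx : τ i (τ j x) = τ j x := by
      rw [h.apply_anticomm hi hj hji.symm, hx, map_neg, neg_neg]
    have h₁ : B (τ j y) y = 0 := by rw [hB.eq]; exact horth hy hτy
    have h₂ : B (τ j x) x = 0 := horth hτx hx
    have h₃ : B (τ j x) y = B (τ j y) x := by rw [h.isAdjointPair j hj, hB.eq]
    simp only [map_add, LinearMap.add_apply, h₁, h₂, h₃]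
    ring
  have hterm_i : B (τ i (y + x)) (y + x) = B y y - B x x := by
    simp only [map_add, hy, hx, LinearMap.add_apply, map_neg, LinearMap.neg_apply, hyx, hxy]
    ring
  rw [← Finset.add_sum_erase J _ hi, hterm_i, mul_sub, Finset.mul_sum, Finset.sum_congr rfl
    fun j hj => show B (τ j (y + x)) (y + x) ^ 2 = 4 * B (τ j y) x ^ 2 by rw [hterm j hj]; ring]
  simp only [map_add, LinearMap.add_apply, hyx, hxy]
  ring

theorem card_le_finrank_ker_add_one [FiniteDimensional ℝ S] (h : IsCliffordSystem B J τ)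
    {i k : ι} (hi : i ∈ J) (hk : k ∈ J) (hik : i ≠ k) {n : ℕ} (hn : 2 * n ≤ finrank ℝ S) :
    n ≤ finrank ℝ (LinearMap.ker (τ i + 1)) := by
  set P := LinearMap.ker (τ i - 1)
  set N := LinearMap.ker (τ i + 1)
  have hsup : P ⊔ N = ⊤ := by
    refine eq_top_iff.2 fun x _ => ?_
    have hx : x = (2⁻¹ : ℝ) • (x + τ i x) + (2⁻¹ : ℝ) • (x - τ i x) := by module
    rw [hx]
    refine Submodule.add_mem_sup (Submodule.smul_mem _ _ ?_) (Submodule.smul_mem _ _ ?_) <;>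
      simp only [P, N, LinearMap.mem_ker, LinearMap.sub_apply, LinearMap.add_apply, map_add,
        map_sub, h.apply_apply hi, Module.End.one_apply] <;> abel
  have hPN : finrank ℝ P ≤ finrank ℝ N := by
    refine LinearMap.finrank_le_finrank_of_injective (f := (τ k).restrict fun x hx => ?_)
      fun x y hxy => ?_
    · simp only [P, N, LinearMap.mem_ker, LinearMap.sub_apply, LinearMap.add_apply,
        Module.End.one_apply, sub_eq_zero] at hx ⊢
      rw [h.apply_anticomm hi hk hik, hx, neg_add_cancel]
    · apply Subtype.ext
      have := congrArg (fun z : N => τ k (z : S)) hxy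
      simpa only [LinearMap.restrict_apply, h.apply_apply hk] using this
  have := Submodule.finrank_add_le_finrank_add_finrank P N
  rw [hsup, finrank_top] at this
  omega

theorem exists_sum_sq_lt [FiniteDimensional ℝ S] (h : IsCliffordSystem B J τ) (hB : B.IsSymm)
    (hpos : ∀ x, x ≠ 0 → 0 < B x x) (hJ : 1 < #J) (hdim : 2 * #J ≤ finrank ℝ S) :
    ∃ s, ∑ j ∈ J, B (τ j s) s ^ 2 < B s s ^ 2 := by
  classical
  obtain ⟨i, hi, k, hk, hik⟩ := Finset.one_lt_card.1 hJ
  set N := LinearMap.ker (τ i + 1)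
  have hN : #J ≤ finrank ℝ N := h.card_le_finrank_ker_add_one hi hk hik hdim
  obtain ⟨x₀, hx₀N, hx₀⟩ := Submodule.exists_mem_ne_zero_of_ne_bot
    (Submodule.one_le_finrank_iff.1 (by omega) : N ≠ ⊥)
  have hx₀_eig : τ i x₀ = -x₀ := add_eq_zero_iff_eq_neg.1 (LinearMap.mem_ker.1 hx₀N)
  set y := τ k x₀
  have hy : τ i y = y := by rw [h.apply_anticomm hi hk hik, hx₀_eig, map_neg, neg_neg]
  have hy₀ : y ≠ 0 := fun hy₀ => hx₀ (by simpa [y, h.apply_apply hk] using congrArg (τ k) hy₀)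
  let L : N →ₗ[ℝ] (J.erase i → ℝ) := LinearMap.pi fun j => B (τ j y) ∘ₗ N.subtype
  obtain ⟨⟨x, hxN⟩, hxL, hx_ne⟩ := Submodule.exists_mem_ne_zero_of_ne_bot
    (LinearMap.ker_ne_bot_of_finrank_lt (f := L) (by simp [Finset.card_erase_of_mem hi]; omega))
  have hx : τ i x = -x := add_eq_zero_iff_eq_neg.1 (LinearMap.mem_ker.1 hxN)
  have hx₀ : x ≠ 0 := fun h0 => hx_ne (by simp [h0])
  refine ⟨y + x, sub_pos.1 ?_⟩
  rw [h.sq_sub_sum_sq_of_eigen hB hi hy hx, Finset.sum_eq_zero fun j hj => ?_, sub_zero]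
  · have := hpos y hy₀
    have := hpos x hx₀
    positivity
  · have := congrFun (LinearMap.mem_ker.1 hxL) ⟨j, hj⟩
    simp only [L, LinearMap.pi_apply, LinearMap.comp_apply, Submodule.subtype_apply] at this
    simp [this]

end IsCliffordSystem

end LinearMap.BilinForm

section Spinor

variable {V}

theorem Qf_apply {η : BilinForm ℝ V} (v : V) : Qf V η v = -η v v := by
  simp [Qf]

namespace IsLorentzianBasis

variable {η : BilinForm ℝ V} {e : Basis (Fin 11) ℝ V}

theorem apply_self_eq (he : IsLorentzianBasis V η e) (v : V) :
    η v v = η (e 0) v ^ 2 - ∑ j ∈ univ.erase 0, η (e j) v ^ 2 := by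
  have happ : ∀ j, η (e j) v = (if (j : ℕ) = 0 then 1 else -1) * e.repr v j := fun j => by
    conv_lhs => rw [← e.sum_repr v]
    simp only [map_sum, map_smul, smul_eq_mul, he j, mul_ite, mul_zero, Finset.sum_ite_eq,
      Finset.mem_univ, if_true]
    split_ifs <;> ring
  have hvv : η v v = ∑ j, e.repr v j * η (e j) v := by
    calc η v v = η (∑ j, e.repr v j • e j) v := by rw [e.sum_repr]
      _ = _ := by simp only [map_sum, map_smul, LinearMap.sum_apply, LinearMap.smul_apply,
          smul_eq_mul]
  rw [hvv, ← Finset.add_sum_erase _ _ (Finset.mem_univ 0), sub_eq_add_neg,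
    ← Finset.sum_neg_distrib]
  congr 1
  · simp [happ]; ring
  · refine Finset.sum_congr rfl fun j hj => ?_
    have hj : (j : ℕ) ≠ 0 := Fin.val_ne_iff.2 (Finset.ne_of_mem_erase hj)
    simp [happ, hj, sq]

theorem ι_zero_mul_self (he : IsLorentzianBasis V η e) :
    CliffordAlgebra.ι (Qf V η) (e 0) * CliffordAlgebra.ι (Qf V η) (e 0) = -1 := by
  rw [CliffordAlgebra.ι_sq_scalar, Qf_apply, he]
  simp

theorem ι_mul_self_of_ne_zero (he : IsLorentzianBasis V η e) {j : Fin 11} (hj : j ≠ 0) :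
    CliffordAlgebra.ι (Qf V η) (e j) * CliffordAlgebra.ι (Qf V η) (e j) = 1 := by
  rw [CliffordAlgebra.ι_sq_scalar, Qf_apply, he]
  simp [hj]

theorem ι_mul_ι_of_ne (he : IsLorentzianBasis V η e) {i j : Fin 11} (hij : i ≠ j) :
    CliffordAlgebra.ι (Qf V η) (e i) * CliffordAlgebra.ι (Qf V η) (e j) =
      -(CliffordAlgebra.ι (Qf V η) (e j) * CliffordAlgebra.ι (Qf V η) (e i)) := by
  refine CliffordAlgebra.ι_mul_ι_comm_of_isOrtho ?_
  rw [QuadraticMap.isOrtho_def]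
  simp only [Qf_apply, map_add, LinearMap.add_apply, he i j, he j i, if_neg hij,
    if_neg hij.symm]
  ring

end IsLorentzianBasis

def gamma {S : Type*} [AddCommGroup S] [Module ℝ S] {η : BilinForm ℝ V}
    (ρ : CliffordAlgebra (Qf V η) →ₐ[ℝ] Module.End ℝ S) (e : Basis (Fin 11) ℝ V) (j : Fin 11) :
    Module.End ℝ S :=
  ρ (CliffordAlgebra.ι (Qf V η) (e j))

variable {S : Type*} [AddCommGroup S] [Module ℝ S] {η : BilinForm ℝ V} {e : Basis (Fin 11) ℝ V}
  (ρ : CliffordAlgebra (Qf V η) →ₐ[ℝ] Module.End ℝ S)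

theorem gamma_zero_mul_self (he : IsLorentzianBasis V η e) :
    gamma ρ e 0 * gamma ρ e 0 = -1 := by
  rw [gamma, ← map_mul ρ, he.ι_zero_mul_self, map_neg, map_one]

theorem gamma_mul_self_of_ne_zero (he : IsLorentzianBasis V η e) {j : Fin 11} (hj : j ≠ 0) :
    gamma ρ e j * gamma ρ e j = 1 := by
  rw [gamma, ← map_mul ρ, he.ι_mul_self_of_ne_zero hj, map_one]

theorem gamma_mul_self_eq_one_or_neg_one (he : IsLorentzianBasis V η e) (j : Fin 11) :
    gamma ρ e j * gamma ρ e j = 1 ∨ gamma ρ e j * gamma ρ e j = -1 := by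
  rcases eq_or_ne j 0 with rfl | hj
  · exact .inr (gamma_zero_mul_self ρ he)
  · exact .inl (gamma_mul_self_of_ne_zero ρ he hj)

theorem gamma_mul_gamma_of_ne (he : IsLorentzianBasis V η e) {i j : Fin 11} (hij : i ≠ j) :
    gamma ρ e i * gamma ρ e j = -(gamma ρ e j * gamma ρ e i) := by
  rw [gamma, gamma, ← map_mul ρ, ← map_mul ρ, he.ι_mul_ι_of_ne hij, map_neg]

theorem gamma_zero_mul_mul_gamma_zero_mul (he : IsLorentzianBasis V η e) {j : Fin 11}
    (hj : j ≠ 0) (k : Fin 11) :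
    gamma ρ e 0 * gamma ρ e j * (gamma ρ e 0 * gamma ρ e k) = gamma ρ e j * gamma ρ e k := by
  calc _ = gamma ρ e 0 * (gamma ρ e j * gamma ρ e 0) * gamma ρ e k := by simp only [mul_assoc]
    _ = -(gamma ρ e 0 * gamma ρ e 0) * (gamma ρ e j * gamma ρ e k) := by
      rw [gamma_mul_gamma_of_ne ρ he hj]; noncomm_ring
    _ = _ := by rw [gamma_zero_mul_self ρ he, neg_neg, one_mul]

theorem gamma_zero_bijective (he : IsLorentzianBasis V η e) :
    Function.Bijective (gamma ρ e 0) := by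
  refine Function.bijective_iff_has_inverse.2 ⟨-gamma ρ e 0, fun x => ?_, fun x => ?_⟩ <;>
    simp [← Module.End.mul_apply, gamma_zero_mul_self ρ he]

theorem adjoin_range_gamma (hρ : Function.Surjective ρ) :
    Algebra.adjoin ℝ (Set.range (gamma ρ e)) = ⊤ := by
  have hι : Algebra.adjoin ℝ (Set.range fun j => CliffordAlgebra.ι (Qf V η) (e j)) = ⊤ := by
    refine top_unique (CliffordAlgebra.adjoin_range_ι (Q := Qf V η) ▸
      Algebra.adjoin_le ?_)
    rintro _ ⟨v, rfl⟩
    rw [← e.sum_repr v, map_sum]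
    exact Subalgebra.sum_mem _ fun j _ => by
      rw [map_smul]
      exact Subalgebra.smul_mem _ (Algebra.subset_adjoin (Set.mem_range_self j)) _
  rw [show Set.range (gamma ρ e) = ρ '' Set.range fun j => CliffordAlgebra.ι (Qf V η) (e j) by
    rw [← Set.range_comp]; rfl, ← AlgHom.map_adjoin, hι, Algebra.map_top,
    (AlgHom.range_eq_top ρ).2 hρ]

variable {B : BilinForm ℝ S}

theorem isAdjointPair_gamma_zero (he : IsLorentzianBasis V η e)
    (hB : ∀ j, B.IsOrthogonal (gamma ρ e j)) :
    IsAdjointPair B B (gamma ρ e 0) (-gamma ρ e 0 : Module.End ℝ S) :=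
  (hB 0).isAdjointPair_of_mul_self_eq_neg_one (gamma_zero_mul_self ρ he)

theorem isAdjointPair_gamma_of_ne_zero (he : IsLorentzianBasis V η e)
    (hB : ∀ j, B.IsOrthogonal (gamma ρ e j)) {j : Fin 11} (hj : j ≠ 0) :
    IsAdjointPair B B (gamma ρ e j) (gamma ρ e j) :=
  (hB j).isAdjointPair_of_mul_self_eq_one (gamma_mul_self_of_ne_zero ρ he hj)

theorem isAdjointPair_comp_gamma_zero (he : IsLorentzianBasis V η e)
    (hB : ∀ j, B.IsOrthogonal (gamma ρ e j)) (j : Fin 11) :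
    IsAdjointPair (B ∘ₗ gamma ρ e 0) (B ∘ₗ gamma ρ e 0) (gamma ρ e j)
      (-gamma ρ e j : Module.End ℝ S) := by
  intro x y
  simp only [LinearMap.comp_apply, LinearMap.neg_apply, map_neg, ← Module.End.mul_apply]
  rcases eq_or_ne j 0 with rfl | hj
  · rw [gamma_zero_mul_self ρ he, hB 0]
    simp
  · rw [gamma_mul_gamma_of_ne ρ he hj.symm, LinearMap.neg_apply, map_neg, LinearMap.neg_apply,
      Module.End.mul_apply, isAdjointPair_gamma_of_ne_zero ρ he hB hj]

theorem isCliffordSystem_gamma (he : IsLorentzianBasis V η e)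
    (hB : ∀ j, B.IsOrthogonal (gamma ρ e j)) :
    B.IsCliffordSystem (univ.erase 0) fun j => gamma ρ e 0 * gamma ρ e j where
  isAdjointPair j hj := by
    have := (isAdjointPair_gamma_zero ρ he hB).mul
      (isAdjointPair_gamma_of_ne_zero ρ he hB (Finset.ne_of_mem_erase hj))
    rwa [mul_neg, ← gamma_mul_gamma_of_ne ρ he (Finset.ne_of_mem_erase hj).symm] at this
  mul_self j hj := by
    rw [gamma_zero_mul_mul_gamma_zero_mul ρ he (Finset.ne_of_mem_erase hj),
      gamma_mul_self_of_ne_zero ρ he (Finset.ne_of_mem_erase hj)]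
  anticomm j hj k _ hjk := by
    rw [gamma_zero_mul_mul_gamma_zero_mul ρ he (Finset.ne_of_mem_erase hj),
      gamma_zero_mul_mul_gamma_zero_mul ρ he (Finset.ne_of_mem_erase ‹_›),
      gamma_mul_gamma_of_ne ρ he hjk]

theorem apply_self_eq_of_forall_apply_basis (he : IsLorentzianBasis V η e) {c : ℝ} {v : V} {s : S}
    (hv : ∀ j, η (e j) v = c * B ((gamma ρ e 0 * gamma ρ e j) s) s) :
    η v v =
      c ^ 2 * (B s s ^ 2 - ∑ j ∈ univ.erase 0, B ((gamma ρ e 0 * gamma ρ e j) s) s ^ 2) := by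
  simp only [he.apply_self_eq, hv, mul_pow, ← Finset.mul_sum, gamma_zero_mul_self ρ he,
    LinearMap.neg_apply, Module.End.one_apply, map_neg, neg_sq]
  ring

end Spinor

open LinearMap.BilinForm

theorem stmt_15
    (η : LinearMap.BilinForm ℝ V) (e : Module.Basis (Fin 11) ℝ V) (he : IsLorentzianBasis V η e)
    (S : Type) [AddCommGroup S] [Module ℝ S] (hdimS : Module.finrank ℝ S = 32)
    (ρ : CliffordAlgebra (Qf V η) →ₐ[ℝ] Module.End ℝ S) (hρ : Function.Surjective ρ)
    (ω : LinearMap.BilinForm ℝ S)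
    (hω_nd : ω.Nondegenerate)
    (hωι : ∀ (v : V) (s t : S),
      ω (ρ (CliffordAlgebra.ι (Qf V η) v) s) t = - ω s (ρ (CliffordAlgebra.ι (Qf V η) v) t))
    (κ : S →ₗ[ℝ] S →ₗ[ℝ] V)
    (hκ : ∀ (v : V) (s t : S), η v (κ s t) = ω (ρ (CliffordAlgebra.ι (Qf V η) v) s) t)
    :
    (∀ s : S, 0 ≤ η (κ s s) (κ s s)) ∧ (∃ s : S, 0 < η (κ s s) (κ s s)) := by
  have : FiniteDimensional ℝ S := .of_finrank_pos (by omega)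
  have : Nontrivial S := Module.nontrivial_of_finrank_pos (R := ℝ) (by omega)
  obtain ⟨B, hB, hpos, hB_orth⟩ := exists_isSymm_pos_isOrthogonal (gamma ρ e)
    (gamma_mul_self_eq_one_or_neg_one ρ he) (fun _ _ => gamma_mul_gamma_of_ne ρ he) univ
  replace hB_orth : ∀ j, B.IsOrthogonal (gamma ρ e j) := fun j => hB_orth j (mem_univ j)
  have hB_nd : (B ∘ₗ gamma ρ e 0).Nondegenerate := Nondegenerate.comp_of_bijective
    ((B.nondegenerate_iff' (apply_self_nonneg_of_pos hpos) (isSymm_iff.1 hB)).2 hpos)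
    (gamma_zero_bijective ρ he)
  obtain ⟨c, hc⟩ := exists_eq_smul_of_isAdjointPair (B := ω) hB_nd (adjoin_range_gamma ρ hρ)
    (Set.forall_mem_range.2 fun j => ⟨_, isAdjointPair_comp_gamma_zero ρ he hB_orth j,
      fun s t => by simp [gamma, hωι]⟩)
  have hc₀ : c ≠ 0 := by
    rintro rfl
    obtain ⟨x, hx⟩ := exists_ne (0 : S)
    exact hx (hω_nd.1 x fun y => by simp [hc])
  have hnorm : ∀ s, η (κ s s) (κ s s) = c ^ 2 * (B s s ^ 2 -
      ∑ j ∈ univ.erase 0, B ((gamma ρ e 0 * gamma ρ e j) s) s ^ 2) := fun s =>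
    apply_self_eq_of_forall_apply_basis ρ he fun j => by rw [hκ, ← gamma, hc]; rfl
  have hsys := isCliffordSystem_gamma ρ he hB_orth
  refine ⟨fun s => ?_, ?_⟩
  · rw [hnorm]
    exact mul_nonneg (sq_nonneg c)
      (sub_nonneg.2 (hsys.sum_sq_le hB (apply_self_nonneg_of_pos hpos) s))
  · obtain ⟨s, hs⟩ := hsys.exists_sum_sq_lt hB hpos (by decide) (by simp [hdimS])
    exact ⟨s, by rw [hnorm]; exact mul_pos (sq_pos_of_ne_zero hc₀) (sub_pos.2 hs)⟩
end
end

section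
/- The following two injectivity statements hold (together they express the vanishing H^{4,2}(m,g) = 0 of the degree-4 Spencer cohomology of the Poincaré superalgebra): (i) if a linear map δ: Λ²V → so(V) satisfies δ(κ(s,t) ∧ v) = 0 for all s,t ∈ S and v ∈ V, then δ = 0; (ii) if a linear map δ: Λ²V → so(V) satisfies ρ(j(δ(v∧w))) = 0 in End(S) for all v,w ∈ V, where j: so(V) → L ⊂ Cl(V) is the standard embedding characterized by [j(A), ι(u)] = ι(Au) for all u ∈ V, then δ = 0. -/
/-!
Both parts rest on the injectivity of `v ↦ ρ(ι v)`: by the Clifford relation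
`ι v ι w + ι w ι v = polar Q v w`, a vector with `ρ(ι v) = 0` is polar-orthogonal to everything
(a nonzero module makes `ρ` injective on scalars), and the polar form of `-η` is nondegenerate
for a Lorentzian basis. For (ii), `[j(A), ι u] = ι(A u)` then gives `ρ(ι(A u)) = 0`, so `A = 0`.
For (i), `η(v, κ(s,t)) = ω(ρ(ι v)s, t)` and the nondegeneracy of `ω` show that the values of the
Dirac current have trivial `η`-orthogonal complement, hence span `V`, and `δ` vanishes on them.
-/

noncomputable section

variable (V : Type) [AddCommGroup V] [Module ℝ V]

open CliffordAlgebra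

namespace LinearMap.BilinForm

variable {K M : Type*} [Field K] [AddCommGroup M] [Module K M] [FiniteDimensional K M]

theorem eq_top_of_orthogonal_eq_bot {B : LinearMap.BilinForm K M} (hB : B.Nondegenerate)
    {W : Submodule K M} (hW : B.orthogonal W = ⊥) : W = ⊤ := by
  apply Submodule.eq_top_of_finrank_eq
  have := finrank_orthogonal hB W
  rw [hW, finrank_bot] at this
  have := Submodule.finrank_le W
  omega

end LinearMap.BilinForm

namespace CliffordAlgebra

variable {K M A : Type*} [Field K] [AddCommGroup M] [Module K M] [Ring A] [Nontrivial A]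
  [Algebra K A] {Q : QuadraticForm K M}

theorem polar_eq_zero_of_map_ι_eq_zero (f : CliffordAlgebra Q →ₐ[K] A) {v : M}
    (hv : f (ι Q v) = 0) (w : M) : QuadraticMap.polar Q v w = 0 := by
  have h := congrArg f (ι_mul_ι_add_swap v w)
  rw [map_add, map_mul, map_mul, hv, zero_mul, mul_zero, add_zero, AlgHom.commutes] at h
  exact (algebraMap K A).injective (h.symm.trans (map_zero _).symm)

theorem eq_zero_of_map_ι_eq_zero (hQ : (QuadraticMap.polarBilin Q).SeparatingLeft)
    (f : CliffordAlgebra Q →ₐ[K] A) {v : M} (hv : f (ι Q v) = 0) : v = 0 :=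
  hQ v (polar_eq_zero_of_map_ι_eq_zero f hv)

theorem eq_zero_of_commutator_ι_of_map_eq_zero (hQ : (QuadraticMap.polarBilin Q).SeparatingLeft)
    (f : CliffordAlgebra Q →ₐ[K] A) {x : CliffordAlgebra Q} {T : Module.End K M}
    (hx : ∀ u, x * ι Q u - ι Q u * x = ι Q (T u)) (hfx : f x = 0) : T = 0 := by
  ext u
  refine eq_zero_of_map_ι_eq_zero hQ f ?_
  rw [← hx, map_sub, map_mul, map_mul, hfx, zero_mul, mul_zero, sub_zero]

end CliffordAlgebra

theorem span_range_eq_top_of_apply_eq_pairing {K M S : Type*} [Field K] [AddCommGroup M]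
    [Module K M] [FiniteDimensional K M] [AddCommGroup S] [Module K S]
    {η : LinearMap.BilinForm K M} (hη : η.Nondegenerate) {ω : LinearMap.BilinForm K S}
    (hω : ω.SeparatingLeft) {φ : M → Module.End K S} (hφ : ∀ v, φ v = 0 → v = 0)
    {κ : S →ₗ[K] S →ₗ[K] M} (hκ : ∀ v s t, η v (κ s t) = ω (φ v s) t) :
    Submodule.span K (Set.range fun p : S × S => κ p.1 p.2) = ⊤ := by
  refine LinearMap.BilinForm.eq_top_of_orthogonal_eq_bot hη.flip ((Submodule.eq_bot_iff _).2 ?_)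
  intro v hv
  refine hφ v (LinearMap.ext fun s => hω _ fun t => ?_)
  rw [← hκ]
  exact hv _ (Submodule.subset_span ⟨(s, t), rfl⟩)

section Lorentzian

variable {V} {η : LinearMap.BilinForm ℝ V} {e : Module.Basis (Fin 11) ℝ V}

theorem IsLorentzianBasis.nondegenerate (he : IsLorentzianBasis V η e) : η.Nondegenerate :=
  LinearMap.IsOrthoᵢ.nondegenerate_of_not_isOrtho_basis_self e
    (fun i j hij => (he i j).trans (if_neg hij)) fun i => by
      rw [he, if_pos rfl]; split_ifs <;> norm_num

theorem IsLorentzianBasis.polarBilin_nondegenerate (he : IsLorentzianBasis V η e) :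
    (QuadraticMap.polarBilin (Qf V η)).Nondegenerate := by
  have hpolar : ∀ i j,
      QuadraticMap.polarBilin (Qf V η) (e i) (e j) = -(η (e i) (e j) + η (e j) (e i)) := by
    intro i j
    rw [QuadraticMap.polarBilin_apply_apply, Qf, LinearMap.BilinMap.polar_toQuadraticMap]
    simp only [LinearMap.neg_apply]
    ring
  refine LinearMap.IsOrthoᵢ.nondegenerate_of_not_isOrtho_basis_self e
    (fun i j hij => ?_) fun i => ?_
  · change QuadraticMap.polarBilin (Qf V η) (e i) (e j) = 0
    simp [hpolar, he i j, he j i, hij, Ne.symm hij]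
  · rw [hpolar, he, if_pos rfl]; split_ifs <;> norm_num

end Lorentzian

theorem stmt_17
    (η : LinearMap.BilinForm ℝ V) (e : Module.Basis (Fin 11) ℝ V) (he : IsLorentzianBasis V η e)
    (S : Type) [AddCommGroup S] [Module ℝ S] (hdimS : Module.finrank ℝ S = 32)
    (ρ : CliffordAlgebra (Qf V η) →ₐ[ℝ] Module.End ℝ S)
    (ω : LinearMap.BilinForm ℝ S) (hω_nd : ω.Nondegenerate)
    (κ : S →ₗ[ℝ] S →ₗ[ℝ] V)
    (hκ : ∀ (v : V) (s t : S), η v (κ s t) = ω (ρ (CliffordAlgebra.ι (Qf V η) v) s) t)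
    (j : Module.End ℝ V → CliffordAlgebra (Qf V η))
    (hj : ∀ A : Module.End ℝ V, IsSkew V η A →
      j A ∈ Lsub V η ∧ ∀ u : V,
        j A * CliffordAlgebra.ι (Qf V η) u - CliffordAlgebra.ι (Qf V η) u * j A
          = CliffordAlgebra.ι (Qf V η) (A u)) :
    (∀ δ : V →ₗ[ℝ] V →ₗ[ℝ] Module.End ℝ V,
      (∀ v : V, δ v v = 0) → (∀ v w : V, IsSkew V η (δ v w)) →
      (∀ (s t : S) (v : V), δ (κ s t) v = 0) → δ = 0) ∧
    (∀ δ : V →ₗ[ℝ] V →ₗ[ℝ] Module.End ℝ V,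
      (∀ v : V, δ v v = 0) → (∀ v w : V, IsSkew V η (δ v w)) →
      (∀ v w : V, ρ (j (δ v w)) = 0) → δ = 0) := by
  have : FiniteDimensional ℝ V := e.finiteDimensional_of_finite
  have : Nontrivial S := Module.nontrivial_of_finrank_eq_succ (n := 31) hdimS
  have hρι : ∀ v, ρ (ι (Qf V η) v) = 0 → v = 0 := fun _ =>
    eq_zero_of_map_ι_eq_zero he.polarBilin_nondegenerate.1 ρ
  have hκ_span := span_range_eq_top_of_apply_eq_pairing he.nondegenerate hω_nd.1 hρι hκ
  refine ⟨fun δ _ _ hδ => ?_, fun δ _ hskew hδ => ?_⟩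
  · exact LinearMap.ext_on_range hκ_span fun p => by ext v : 1; simp [hδ]
  · ext v w : 2
    exact eq_zero_of_commutator_ι_of_map_eq_zero he.polarBilin_nondegenerate.1 ρ
      (hj _ (hskew v w)).2 (hδ v w)
end
end
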